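/- arXiv:2505.00710 — 4 statements merged into one kernel-verified Lean document; each statement's English description precedes it below -/
import Mathlib

section
/- A sequence of R^N-valued finite Borel measures μ_n on a compact set S ⊂ R^M converges weak-star to μ with total variation norms ‖μ_n‖_TV converging to ‖μ‖_TV if and only if μ_n converges weak-star to μ and the total variation measures |μ_n| converge weak-star to |μ|. -/
open MeasureTheory Filter Topology Metric
open scoped RealInnerProductSpace ENNReal

/-- `ℝ^N` with the Euclidean norm. -/
abbrev EucN (N : ℕ) := EuclideanSpace ℝ (Fin N)

/-- An `ℝ^N`-valued finite signed Borel measure, represented by its `N`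
components, each a finite signed measure. -/
abbrev VM (α : Type) [MeasurableSpace α] (N : ℕ) := Fin N → MeasureTheory.SignedMeasure α

namespace VM

variable {α : Type} [MeasurableSpace α] {N : ℕ}

/-- A dominating positive measure for all components of `μ`. -/
noncomputable def base (μ : VM α N) : Measure α := ∑ i, (μ i).totalVariation

/-- The vector density (Radon–Nikodym derivative) of `μ` with respect to `μ.base`. -/
noncomputable def dens (μ : VM α N) (x : α) : EucN N := WithLp.toLp 2 (fun i => (μ i).rnDeriv μ.base x)

/-- The total variation measure `|μ|` of the vector measure `μ`. -/
noncomputable def var (μ : VM α N) : Measure α := μ.base.withDensity (fun x => ‖μ.dens x‖₊)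

/-- The total variation norm `‖μ‖_TV = |μ|(S)`. -/
noncomputable def tv (μ : VM α N) : ℝ := (μ.var Set.univ).toReal

/-- The value `μ(E) ∈ ℝ^N` of the vector measure on a set `E`. -/
noncomputable def val (μ : VM α N) (E : Set α) : EucN N := WithLp.toLp 2 (fun i => μ i E)

/-- The pairing `⟨φ, μ⟩ = ∫ φ · dμ`. -/
noncomputable def pair (μ : VM α N) (φ : α → EucN N) : ℝ :=
  ∫ x, ⟪φ x, μ.dens x⟫ ∂(μ.base)

end VM

/-- Weak-star convergence of a sequence of vector measures:
convergence of the pairings against every continuous test function. -/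
def WSTendsto {M N : ℕ} {S : Set (EucN M)} (μn : ℕ → VM S N) (μ : VM S N) : Prop :=
  ∀ φ : C(S, EucN N), Filter.Tendsto (fun n => (μn n).pair φ) Filter.atTop (nhds (μ.pair φ))

/-! ### Auxiliary lemmas about scalar truncation in an inner product space -/

section Trunc

variable {E : Type*} [NormedAddCommGroup E] [InnerProductSpace ℝ E]

lemma norm_div_max_smul_le_left {r : ℝ} (hr : 0 ≤ r) (v : E) :
    ‖(r / max r ‖v‖) • v‖ ≤ r := by
  rcases le_or_gt ‖v‖ r with h | h
  · rw [max_eq_left h]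
    rcases eq_or_lt_of_le hr with h0 | h0
    · have hv : v = 0 := norm_le_zero_iff.mp (h.trans h0.symm.le)
      simpa [hv] using hr
    · rw [div_self h0.ne', one_smul]; exact h
  · have hv0 : 0 < ‖v‖ := lt_of_le_of_lt hr h
    rw [max_eq_right h.le, norm_smul, Real.norm_eq_abs,
      abs_of_nonneg (div_nonneg hr hv0.le), div_mul_cancel₀ _ hv0.ne']

lemma norm_div_max_smul_le_norm {r : ℝ} (hr : 0 ≤ r) (v : E) :
    ‖(r / max r ‖v‖) • v‖ ≤ ‖v‖ := by
  have h1 : |r / max r ‖v‖| ≤ 1 := by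
    rcases eq_or_ne (max r ‖v‖) 0 with h | h
    · have hr0 : r = 0 := le_antisymm (h ▸ le_max_left r ‖v‖) hr
      rw [hr0, zero_div, abs_zero]; norm_num
    · have hmax : 0 < max r ‖v‖ :=
        lt_of_le_of_ne (hr.trans (le_max_left _ _)) (Ne.symm h)
      rw [abs_of_nonneg (div_nonneg hr hmax.le), div_le_one hmax]
      exact le_max_left _ _
  calc ‖(r / max r ‖v‖) • v‖ = |r / max r ‖v‖| * ‖v‖ := by
        rw [norm_smul, Real.norm_eq_abs]
    _ ≤ 1 * ‖v‖ := mul_le_mul_of_nonneg_right h1 (norm_nonneg _)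
    _ = ‖v‖ := one_mul _

lemma norm_div_max_smul_sub_le {r : ℝ} (hr : 0 ≤ r) {v w : E} (hw : ‖w‖ ≤ r) :
    ‖(r / max r ‖v‖) • v - w‖ ≤ ‖v - w‖ := by
  rcases le_or_gt ‖v‖ r with h | h
  · rw [max_eq_left h]
    rcases eq_or_lt_of_le hr with h0 | h0
    · have hv : v = 0 := norm_le_zero_iff.mp (h.trans h0.symm.le)
      have hw0 : w = 0 := norm_le_zero_iff.mp (hw.trans h0.symm.le)
      simp [hv, hw0]
    · rw [div_self h0.ne', one_smul]
  · rw [max_eq_right h.le]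
    set t := r / ‖v‖ with ht
    have hv0 : 0 < ‖v‖ := lt_of_le_of_lt hr h
    have ht0 : 0 ≤ t := div_nonneg hr hv0.le
    have ht1 : t ≤ 1 := by rw [ht, div_le_one hv0]; exact h.le
    have htr : t * ‖v‖ = r := div_mul_cancel₀ r hv0.ne'
    have hvw : ⟪v, w⟫ ≤ ‖v‖ * ‖w‖ := real_inner_le_norm v w
    have h2 : ⟪v, w⟫ ≤ t * ‖v‖ ^ 2 := by nlinarith [mul_le_mul_of_nonneg_left hw hv0.le]
    have key : ‖t • v - w‖ ^ 2 ≤ ‖v - w‖ ^ 2 := by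
      rw [norm_sub_sq_real, norm_sub_sq_real, norm_smul, real_inner_smul_left,
        Real.norm_eq_abs, abs_of_nonneg ht0]
      nlinarith [mul_nonneg (sub_nonneg.mpr ht1) (sub_nonneg.mpr h2),
        mul_nonneg (sq_nonneg (1 - t)) (sq_nonneg ‖v‖)]
    have := Real.sqrt_le_sqrt key
    rwa [Real.sqrt_sq (norm_nonneg _), Real.sqrt_sq (norm_nonneg _)] at this

lemma continuous_truncAux {X : Type*} [TopologicalSpace X] {f : X → ℝ} {ψ : X → E}
    (hf : Continuous f) (hf0 : ∀ x, 0 ≤ f x) (hψ : Continuous ψ) :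
    Continuous fun x => (f x / max (f x) ‖ψ x‖) • ψ x := by
  rw [continuous_iff_continuousAt]
  intro x₀
  rcases eq_or_ne (max (f x₀) ‖ψ x₀‖) 0 with h0 | h0
  · have hψ0 : ψ x₀ = 0 := by
      have : ‖ψ x₀‖ ≤ 0 := h0 ▸ le_max_right (f x₀) ‖ψ x₀‖
      exact norm_le_zero_iff.mp this
    have hval : (f x₀ / max (f x₀) ‖ψ x₀‖) • ψ x₀ = 0 := by simp [hψ0]
    have hb : ∀ x, ‖(f x / max (f x) ‖ψ x‖) • ψ x‖ ≤ ‖ψ x‖ := fun x =>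
      norm_div_max_smul_le_norm (hf0 x) (ψ x)
    have hten : Tendsto (fun x => ‖ψ x‖) (𝓝 x₀) (𝓝 0) := by
      have h : Tendsto (fun x => ‖ψ x‖) (𝓝 x₀) (𝓝 ‖ψ x₀‖) := hψ.norm.continuousAt
      rwa [hψ0, norm_zero] at h
    unfold ContinuousAt
    simpa [hval] using squeeze_zero_norm hb hten
  · exact ((hf.continuousAt.div (hf.continuousAt.max hψ.norm.continuousAt) h0).smul
      hψ.continuousAt)

end Trunc

/-! ### Auxiliary lemmas about `VM` -/

namespace VM

variable {α : Type} [MeasurableSpace α] {N : ℕ}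

lemma measurable_dens (μ : VM α N) : Measurable μ.dens :=
  (WithLp.measurable_toLp 2 _).comp (measurable_pi_lambda _ fun i => SignedMeasure.measurable_rnDeriv _ _)

instance isFiniteMeasure_totalVariation (s : SignedMeasure α) :
    IsFiniteMeasure s.totalVariation := by
  unfold MeasureTheory.SignedMeasure.totalVariation
  infer_instance

instance isFiniteMeasure_base (μ : VM α N) : IsFiniteMeasure μ.base := by
  unfold VM.base; infer_instance

lemma norm_dens_le (μ : VM α N) (x : α) :
    ‖μ.dens x‖ ≤ ∑ i, |(μ i).rnDeriv μ.base x| := by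
  have h1 : ∑ i, ‖μ.dens x i‖ ^ 2 ≤ (∑ i, ‖μ.dens x i‖) ^ 2 :=
    Finset.sum_sq_le_sq_sum_of_nonneg fun i _ => norm_nonneg _
  calc ‖μ.dens x‖ = Real.sqrt (∑ i, ‖μ.dens x i‖ ^ 2) := EuclideanSpace.norm_eq _
    _ ≤ Real.sqrt ((∑ i, ‖μ.dens x i‖) ^ 2) := Real.sqrt_le_sqrt h1
    _ = ∑ i, ‖μ.dens x i‖ := Real.sqrt_sq (Finset.sum_nonneg fun i _ => norm_nonneg _)
    _ = ∑ i, |(μ i).rnDeriv μ.base x| := by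
        refine Finset.sum_congr rfl fun i _ => ?_
        rw [Real.norm_eq_abs]; simp [VM.dens]

lemma integrable_norm_dens (μ : VM α N) : Integrable (fun x => ‖μ.dens x‖) μ.base := by
  have hi : Integrable (fun x => ∑ i, |(μ i).rnDeriv μ.base x|) μ.base :=
    integrable_finset_sum _ fun i _ => ((μ i).integrable_rnDeriv μ.base).abs
  refine hi.mono' μ.measurable_dens.norm.aestronglyMeasurable (ae_of_all _ fun x => ?_)
  rw [norm_norm]
  exact μ.norm_dens_le x

instance isFiniteMeasure_var (μ : VM α N) : IsFiniteMeasure μ.var := by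
  constructor
  rw [VM.var, withDensity_apply _ MeasurableSet.univ, setLIntegral_univ]
  simpa [HasFiniteIntegral, enorm_eq_nnnorm] using μ.integrable_norm_dens.hasFiniteIntegral

lemma integral_var (μ : VM α N) (h : α → ℝ) :
    ∫ x, h x ∂μ.var = ∫ x, h x * ‖μ.dens x‖ ∂μ.base := by
  rw [VM.var, integral_withDensity_eq_integral_smul μ.measurable_dens.nnnorm h]
  refine integral_congr_ae (ae_of_all _ fun x => ?_)
  simp [NNReal.smul_def, mul_comm]

lemma integrable_var_iff (μ : VM α N) (h : α → ℝ) :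
    Integrable h μ.var ↔ Integrable (fun x => ‖μ.dens x‖ * h x) μ.base := by
  rw [VM.var, integrable_withDensity_iff_integrable_smul μ.measurable_dens.nnnorm]
  simp only [NNReal.smul_def, coe_nnnorm, smul_eq_mul]

lemma integrable_mul_norm_dens (μ : VM α N) {f : α → ℝ}
    (hf : AEStronglyMeasurable f μ.base) {C : ℝ} (hC : ∀ x, |f x| ≤ C) :
    Integrable (fun x => f x * ‖μ.dens x‖) μ.base := by
  refine (μ.integrable_norm_dens.const_mul C).mono'
    (hf.mul μ.measurable_dens.norm.aestronglyMeasurable) (ae_of_all _ fun x => ?_)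
  rw [Real.norm_eq_abs, abs_mul, abs_of_nonneg (norm_nonneg _)]
  exact mul_le_mul_of_nonneg_right (hC x) (norm_nonneg _)

lemma integrable_inner_dens (μ : VM α N) {φ : α → EucN N}
    (hφ : AEStronglyMeasurable φ μ.base) {C : ℝ} (hC : ∀ x, ‖φ x‖ ≤ C) :
    Integrable (fun x => ⟪φ x, μ.dens x⟫) μ.base := by
  refine (μ.integrable_norm_dens.const_mul C).mono'
    (hφ.inner μ.measurable_dens.aestronglyMeasurable) (ae_of_all _ fun x => ?_)
  calc ‖⟪φ x, μ.dens x⟫‖ ≤ ‖φ x‖ * ‖μ.dens x‖ := norm_inner_le_norm _ _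
    _ ≤ C * ‖μ.dens x‖ := mul_le_mul_of_nonneg_right (hC x) (norm_nonneg _)

lemma pair_le_integral (μ : VM α N) {φ : α → EucN N} {f : α → ℝ}
    (hφ : AEStronglyMeasurable φ μ.base) (hf : AEStronglyMeasurable f μ.base)
    {C : ℝ} (hCφ : ∀ x, ‖φ x‖ ≤ C) (hCf : ∀ x, |f x| ≤ C)
    (hle : ∀ x, ‖φ x‖ ≤ f x) :
    μ.pair φ ≤ ∫ x, f x ∂μ.var := by
  rw [μ.integral_var f]
  refine integral_mono (μ.integrable_inner_dens hφ hCφ)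
    (μ.integrable_mul_norm_dens hf hCf) fun x => ?_
  calc ⟪φ x, μ.dens x⟫ ≤ ‖φ x‖ * ‖μ.dens x‖ := real_inner_le_norm _ _
    _ ≤ f x * ‖μ.dens x‖ := mul_le_mul_of_nonneg_right (hle x) (norm_nonneg _)

lemma norm_gfun_le (μ : VM α N) {f : α → ℝ} (hf0 : ∀ x, 0 ≤ f x) (x : α) :
    ‖(f x / ‖μ.dens x‖) • μ.dens x‖ ≤ f x := by
  rcases eq_or_ne (μ.dens x) 0 with h | h
  · simpa [h] using hf0 x
  · have h0 : 0 < ‖μ.dens x‖ := norm_pos_iff.mpr h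
    rw [norm_smul, Real.norm_eq_abs, abs_of_nonneg (div_nonneg (hf0 x) h0.le),
      div_mul_cancel₀ _ h0.ne']

lemma inner_gfun (μ : VM α N) (f : α → ℝ) (x : α) :
    ⟪(f x / ‖μ.dens x‖) • μ.dens x, μ.dens x⟫ = f x * ‖μ.dens x‖ := by
  rcases eq_or_ne (μ.dens x) 0 with h | h
  · simp [h]
  · have h0 : ‖μ.dens x‖ ≠ 0 := norm_ne_zero_iff.mpr h
    rw [real_inner_smul_left, real_inner_self_eq_norm_mul_norm]
    field_simp

end VM

section CompactAux

variable {M N : ℕ} {S : Set (EucN M)} [CompactSpace S]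

lemma VM.integrable_cm (ν : VM S N) (f : C(S, ℝ)) :
    Integrable (fun x => f x) ν.var :=
  (integrable_const ‖f‖).mono' f.continuous.measurable.aestronglyMeasurable
    (ae_of_all _ fun x => f.norm_coe_le_norm x)

lemma VM.integral_const_add (ν : VM S N) (c : ℝ) (f : C(S, ℝ)) :
    ∫ x, (c + f x) ∂ν.var = c * ν.tv + ∫ x, f x ∂ν.var := by
  rw [integral_add (integrable_const c) (ν.integrable_cm f), integral_const]
  simp [VM.tv, smul_eq_mul, mul_comm, measureReal_def]

lemma VM.integral_const_sub (ν : VM S N) (c : ℝ) (f : C(S, ℝ)) :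
    ∫ x, (c - f x) ∂ν.var = c * ν.tv - ∫ x, f x ∂ν.var := by
  rw [integral_sub (integrable_const c) (ν.integrable_cm f), integral_const]
  simp [VM.tv, smul_eq_mul, mul_comm, measureReal_def]

lemma VM.exists_good_pair (μ : VM S N) (f : C(S, ℝ)) (hf0 : ∀ x, 0 ≤ f x)
    {ε : ℝ} (hε : 0 < ε) :
    ∃ ψ : C(S, EucN N), (∀ x, ‖ψ x‖ ≤ f x) ∧ |μ.pair ψ - ∫ x, f x ∂μ.var| ≤ ε := by
  classical
  set g : S → EucN N := fun x => (f x / ‖μ.dens x‖) • μ.dens x with hg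
  have hgmeas : Measurable g :=
    (f.continuous.measurable.div μ.measurable_dens.norm).smul μ.measurable_dens
  have hgle : ∀ x, ‖g x‖ ≤ f x := fun x => μ.norm_gfun_le hf0 x
  have hCf : ∀ x : S, |f x| ≤ ‖f‖ := fun x => f.norm_coe_le_norm x
  have hfle : ∀ x : S, f x ≤ ‖f‖ := fun x => (le_abs_self _).trans (hCf x)
  have hgint : Integrable g μ.var :=
    (integrable_const ‖f‖).mono' hgmeas.aestronglyMeasurable
      (ae_of_all _ fun x => (hgle x).trans (hfle x))
  obtain ⟨ψ₀, hψ₀, hψ₀int⟩ := hgint.exists_boundedContinuous_integral_sub_le hε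
  set ψ : C(S, EucN N) :=
    ⟨fun x => (f x / max (f x) ‖ψ₀ x‖) • ψ₀ x,
      continuous_truncAux f.continuous hf0 ψ₀.continuous⟩ with hψdef
  have hψle : ∀ x, ‖ψ x‖ ≤ f x := fun x => norm_div_max_smul_le_left (hf0 x) (ψ₀ x)
  refine ⟨ψ, hψle, ?_⟩
  have key1 : ∫ x, f x ∂μ.var = ∫ x, ⟪g x, μ.dens x⟫ ∂μ.base := by
    rw [μ.integral_var fun x => f x]
    exact integral_congr_ae (ae_of_all _ fun x => (μ.inner_gfun (fun x => f x) x).symm)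
  have hint1 : Integrable (fun x => ⟪ψ x, μ.dens x⟫) μ.base :=
    μ.integrable_inner_dens ψ.continuous.measurable.aestronglyMeasurable
      (fun x => (hψle x).trans (hfle x))
  have hint2 : Integrable (fun x => ⟪g x, μ.dens x⟫) μ.base :=
    μ.integrable_inner_dens hgmeas.aestronglyMeasurable (fun x => (hgle x).trans (hfle x))
  have hsub : μ.pair ψ - ∫ x, f x ∂μ.var = ∫ x, ⟪ψ x - g x, μ.dens x⟫ ∂μ.base := by
    rw [key1, VM.pair, ← integral_sub hint1 hint2]
    exact integral_congr_ae (ae_of_all _ fun x => (inner_sub_left _ _ _).symm)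
  have hb : Integrable (fun x => ‖ψ₀ x - g x‖ * ‖μ.dens x‖) μ.base := by
    have h1 : Integrable (fun x => ‖ψ₀ x - g x‖) μ.var := (hψ₀int.sub hgint).norm
    have h2 := (μ.integrable_var_iff fun x => ‖ψ₀ x - g x‖).mp h1
    exact h2.congr (ae_of_all _ fun x => mul_comm _ _)
  have hinorm : Integrable (fun x => ‖⟪ψ x - g x, μ.dens x⟫‖) μ.base := by
    exact ((hint1.sub hint2).congr
      (ae_of_all _ fun x => (inner_sub_left _ _ _).symm)).norm
  have habs : |∫ x, ⟪ψ x - g x, μ.dens x⟫ ∂μ.base|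
      ≤ ∫ x, ‖ψ₀ x - g x‖ * ‖μ.dens x‖ ∂μ.base := by
    calc |∫ x, ⟪ψ x - g x, μ.dens x⟫ ∂μ.base|
        ≤ ∫ x, ‖⟪ψ x - g x, μ.dens x⟫‖ ∂μ.base := by
          simpa [Real.norm_eq_abs] using
            norm_integral_le_integral_norm (fun x => ⟪ψ x - g x, μ.dens x⟫) (μ := μ.base)
      _ ≤ ∫ x, ‖ψ₀ x - g x‖ * ‖μ.dens x‖ ∂μ.base := by
          refine integral_mono hinorm hb fun x => ?_
          calc ‖⟪ψ x - g x, μ.dens x⟫‖ ≤ ‖ψ x - g x‖ * ‖μ.dens x‖ := norm_inner_le_norm _ _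
            _ ≤ ‖ψ₀ x - g x‖ * ‖μ.dens x‖ := by
                refine mul_le_mul_of_nonneg_right ?_ (norm_nonneg _)
                exact norm_div_max_smul_sub_le (hf0 x) (hgle x)
  have hfinal : ∫ x, ‖ψ₀ x - g x‖ * ‖μ.dens x‖ ∂μ.base = ∫ x, ‖g x - ψ₀ x‖ ∂μ.var := by
    rw [μ.integral_var fun x => ‖g x - ψ₀ x‖]
    exact integral_congr_ae (ae_of_all _ fun x =>
      congrArg (fun t => t * ‖μ.dens x‖) (norm_sub_rev _ _))
  rw [hsub]
  exact habs.trans (by rw [hfinal]; exact hψ₀)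

end CompactAux

/-- A sequence of vector measures converges weak-star with convergence of the
total variation norms iff it converges weak-star and the total variation
measures converge weak-star. -/
theorem stmt0 {M N : ℕ} (S : Set (EucN M)) (hS : IsCompact S) (hSu : ¬ S.Countable)
    (μn : ℕ → VM S N) (μ : VM S N) :
    (WSTendsto μn μ ∧
        Tendsto (fun n => (μn n).tv) atTop (𝓝 μ.tv)) ↔
      (WSTendsto μn μ ∧
        ∀ f : C(S, ℝ), Tendsto (fun n => ∫ x, f x ∂((μn n).var)) atTop
          (𝓝 (∫ x, f x ∂(μ.var)))) := by
  haveI : CompactSpace S := isCompact_iff_compactSpace.mp hS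
  constructor
  · rintro ⟨hws, htv⟩
    refine ⟨hws, fun f => ?_⟩
    -- main direction
    rw [Metric.tendsto_atTop]
    intro ε hε
    set c : ℝ := ‖f‖ with hc
    have hc0 : 0 ≤ c := norm_nonneg f
    have hCf : ∀ x : S, |f x| ≤ c := fun x => f.norm_coe_le_norm x
    set f₁ : C(S, ℝ) := ContinuousMap.const S c + f with hf₁
    set f₂ : C(S, ℝ) := ContinuousMap.const S c - f with hf₂
    have hf₁0 : ∀ x, 0 ≤ f₁ x := fun x => by
      have := (abs_le.mp (hCf x)).1
      simp only [hf₁, ContinuousMap.add_apply, ContinuousMap.const_apply]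
      linarith
    have hf₂0 : ∀ x, 0 ≤ f₂ x := fun x => by
      have := (abs_le.mp (hCf x)).2
      simp only [hf₂, ContinuousMap.sub_apply, ContinuousMap.const_apply]
      linarith
    have hε4 : 0 < ε / 4 := by linarith
    obtain ⟨ψ₁, hψ₁le, hψ₁⟩ := μ.exists_good_pair f₁ hf₁0 hε4
    obtain ⟨ψ₂, hψ₂le, hψ₂⟩ := μ.exists_good_pair f₂ hf₂0 hε4
    set δ : ℝ := ε / (4 * (c + 1)) with hδ
    have hδ0 : 0 < δ := by positivity
    have hcδ : c * δ ≤ ε / 4 := by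
      have e1 : (c + 1) * δ = ε / 4 := by
        rw [hδ]; field_simp
      have e2 : c * δ ≤ (c + 1) * δ :=
        mul_le_mul_of_nonneg_right (by linarith) hδ0.le
      linarith
    obtain ⟨N₁, hN₁⟩ := Metric.tendsto_atTop.mp (hws ψ₁) (ε / 4) hε4
    obtain ⟨N₂, hN₂⟩ := Metric.tendsto_atTop.mp (hws ψ₂) (ε / 4) hε4
    obtain ⟨N₃, hN₃⟩ := Metric.tendsto_atTop.mp htv δ hδ0
    refine ⟨max N₁ (max N₂ N₃), fun n hn => ?_⟩
    have hn₁ := hN₁ n (le_trans (le_max_left _ _) hn)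
    have hn₂ := hN₂ n (le_trans ((le_max_left _ _).trans (le_max_right _ _)) hn)
    have hn₃ := hN₃ n (le_trans ((le_max_right _ _).trans (le_max_right _ _)) hn)
    rw [Real.dist_eq] at hn₁ hn₂ hn₃ ⊢
    -- bounds for pairings of μn n
    have hbound : ∀ (ν : VM S N) (ψ : C(S, EucN N)) (h : C(S, ℝ)),
        (∀ x, ‖ψ x‖ ≤ h x) → (∀ x, 0 ≤ h x) → ν.pair ψ ≤ ∫ x, h x ∂ν.var := by
      intro ν ψ h hle h0
      refine ν.pair_le_integral ψ.continuous.measurable.aestronglyMeasurable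
        h.continuous.measurable.aestronglyMeasurable
        (C := ‖h‖) (fun x => (hle x).trans ((le_abs_self _).trans (h.norm_coe_le_norm x)))
        (fun x => h.norm_coe_le_norm x) hle
    have hA := hbound (μn n) ψ₁ f₁ hψ₁le hf₁0
    have hB := hbound (μn n) ψ₂ f₂ hψ₂le hf₂0
    -- integral identities
    have hI1n : ∫ x, f₁ x ∂(μn n).var = c * (μn n).tv + ∫ x, f x ∂(μn n).var := by
      simpa [hf₁] using (μn n).integral_const_add c f
    have hI2n : ∫ x, f₂ x ∂(μn n).var = c * (μn n).tv - ∫ x, f x ∂(μn n).var := by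
      simpa [hf₂] using (μn n).integral_const_sub c f
    have hI1 : ∫ x, f₁ x ∂μ.var = c * μ.tv + ∫ x, f x ∂μ.var := by
      simpa [hf₁] using μ.integral_const_add c f
    have hI2 : ∫ x, f₂ x ∂μ.var = c * μ.tv - ∫ x, f x ∂μ.var := by
      simpa [hf₂] using μ.integral_const_sub c f
    have habs1 := abs_le.mp hψ₁
    have habs2 := abs_le.mp hψ₂
    have habsn₁ := abs_lt.mp hn₁
    have habsn₂ := abs_lt.mp hn₂
    have habsn₃ := abs_lt.mp hn₃
    have hctv : c * ((μn n).tv - μ.tv) ≤ ε / 4 ∧ -(ε/4) ≤ c * ((μn n).tv - μ.tv) := by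
      constructor
      · calc c * ((μn n).tv - μ.tv) ≤ c * δ :=
            mul_le_mul_of_nonneg_left (le_of_lt habsn₃.2) hc0
          _ ≤ ε / 4 := hcδ
      · have : -(c * δ) ≤ c * ((μn n).tv - μ.tv) := by
          have := mul_le_mul_of_nonneg_left (le_of_lt habsn₃.1) hc0
          linarith [mul_le_mul_of_nonneg_left habsn₃.1.le hc0]
        linarith
    rw [abs_lt]
    rw [hI1n] at hA
    rw [hI2n] at hB
    rw [hI1] at hψ₁ habs1
    rw [hI2] at hψ₂ habs2
    constructor
    · -- lower bound: I_n > I - ε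
      linarith [hA, habs1.1, habsn₁.1, hctv.2]
    · -- upper bound
      linarith [hB, habs2.1, habsn₂.1, hctv.1]
  · rintro ⟨hws, hvar⟩
    refine ⟨hws, ?_⟩
    have := hvar (ContinuousMap.const S 1)
    simpa [VM.tv, integral_const, smul_eq_mul, measureReal_def] using this
end

section
/- Let V be a TV-norm-closed linear subspace of M(S)^N, A: M(S)^N → H weak-star continuous linear into a Hilbert space, λ > 0, f ∈ H. Then μ ∈ V minimizes F(ν) = ‖f − Aν‖²_H + λ‖ν‖_TV over V if and only if ⟨μ, A*(f − Aμ)⟩ = (λ/2)‖μ‖_TV and |⟨ν, A*(f − Aμ)⟩| ≤ (λ/2)‖ν‖_TV for all ν ∈ V. -/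
open MeasureTheory Filter Topology Metric
open scoped RealInnerProductSpace ENNReal

namespace VM

variable {α : Type} [MeasurableSpace α] {N : ℕ}

-- auxiliary
noncomputable def densA (μ : VM α N) (τ : Measure α) (x : α) : EucN N :=
  WithLp.toLp 2 (fun i => (μ i).rnDeriv τ x)

lemma dens_eq_densA (μ : VM α N) : μ.dens = densA μ μ.base := rfl

noncomputable def J (μ : VM α N) (τ : Measure α) : ℝ≥0∞ :=
  ∫⁻ x, (‖densA μ τ x‖₊ : ℝ≥0∞) ∂τ

lemma measurable_densA (μ : VM α N) (τ : Measure α) :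
    Measurable (densA μ τ) :=
  (WithLp.measurable_toLp 2 _).comp (measurable_pi_lambda _ fun _ => SignedMeasure.measurable_rnDeriv _ _)

lemma measurable_Jfun (μ : VM α N) (τ : Measure α) :
    Measurable (fun x => (‖densA μ τ x‖₊ : ℝ≥0∞)) :=
  (measurable_densA μ τ).nnnorm.coe_nnreal_ennreal

instance instIsFiniteTV (s : SignedMeasure α) : IsFiniteMeasure s.totalVariation := by
  unfold SignedMeasure.totalVariation; infer_instance

instance instIsFiniteBase (μ : VM α N) : IsFiniteMeasure μ.base := by
  constructor
  rw [VM.base, Measure.finset_sum_apply]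
  exact ENNReal.sum_lt_top.mpr fun i _ => measure_lt_top _ _

lemma totalVariation_ac_base (μ : VM α N) (i : Fin N) : (μ i).totalVariation ≪ μ.base := by
  refine Measure.AbsolutelyContinuous.mk fun s hs h0 => ?_
  rw [VM.base, Measure.finset_sum_apply] at h0
  exact (Finset.sum_eq_zero_iff.mp h0) i (Finset.mem_univ i)

lemma ac_of_base_ac (μ : VM α N) {τ : Measure α} (h : μ.base ≪ τ) (i : Fin N) :
    μ i ≪ᵥ τ.toENNRealVectorMeasure := by
  rw [SignedMeasure.absolutelyContinuous_ennreal_iff,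
    VectorMeasure.ennrealToMeasure_toENNRealVectorMeasure]
  exact (totalVariation_ac_base μ i).trans h

lemma tv_eq_J (μ : VM α N) : μ.tv = (J μ μ.base).toReal := by
  rw [VM.tv, VM.var, withDensity_apply _ MeasurableSet.univ, Measure.restrict_univ, VM.J,
    dens_eq_densA]

lemma signed_chain (s : SignedMeasure α)
    (b τ : Measure α) [IsFiniteMeasure b] [IsFiniteMeasure τ]
    (hs : s ≪ᵥ b.toENNRealVectorMeasure) (hbτ : b ≪ τ) :
    s.rnDeriv τ =ᵐ[τ] fun x => (b.rnDeriv τ x).toReal • s.rnDeriv b x := by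
  have hfb : Integrable (s.rnDeriv b) b := SignedMeasure.integrable_rnDeriv s b
  have hfi : Integrable (fun x => (b.rnDeriv τ x).toReal • s.rnDeriv b x) τ :=
    (integrable_rnDeriv_smul_iff hbτ).mpr hfb
  refine (SignedMeasure.eq_rnDeriv (μ := τ) (s := s) 0 _ hfi
    (VectorMeasure.MutuallySingular.zero_right.symm) ?_).symm
  rw [zero_add, withDensityᵥ_rnDeriv_smul hbτ hfb,
    (SignedMeasure.absolutelyContinuous_iff_withDensityᵥ_rnDeriv_eq s b).mp hs]

lemma J_eq (μ : VM α N) (τ : Measure α) [IsFiniteMeasure τ] (h : μ.base ≪ τ) :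
    J μ τ = J μ μ.base := by
  set b := μ.base with hb
  have hchain : ∀ᵐ x ∂τ, ∀ i : Fin N,
      (μ i).rnDeriv τ x = (b.rnDeriv τ x).toReal • (μ i).rnDeriv b x := by
    rw [MeasureTheory.ae_all_iff]
    intro i
    exact signed_chain (μ i) b τ (ac_of_base_ac μ Measure.AbsolutelyContinuous.rfl i) h
  have hlt : ∀ᵐ x ∂τ, b.rnDeriv τ x < ⊤ := Measure.rnDeriv_lt_top b τ
  have hcong : (fun x => (‖densA μ τ x‖₊ : ℝ≥0∞))
      =ᵐ[τ] fun x => b.rnDeriv τ x * (‖densA μ b x‖₊ : ℝ≥0∞) := by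
    filter_upwards [hchain, hlt] with x hx hxlt
    have h1 : densA μ τ x = (b.rnDeriv τ x).toReal • densA μ b x := by
      ext i
      exact hx i
    rw [h1, nnnorm_smul, ENNReal.coe_mul]
    congr 1
    have : ‖(b.rnDeriv τ x).toReal‖₊ = (b.rnDeriv τ x).toNNReal := by
      ext
      simp [Real.norm_of_nonneg ENNReal.toReal_nonneg, ENNReal.coe_toNNReal_eq_toReal]
    rw [this, ENNReal.coe_toNNReal hxlt.ne]
  rw [J, lintegral_congr_ae hcong, J]
  set F := fun x => (‖densA μ b x‖₊ : ℝ≥0∞) with hF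
  have hFm : Measurable F := measurable_Jfun μ b
  conv_rhs => rw [← Measure.withDensity_rnDeriv_eq b τ h]
  rw [lintegral_withDensity_eq_lintegral_mul τ (Measure.measurable_rnDeriv b τ) hFm]
  rfl

lemma eucN_norm_le_sum (v : EucN N) : ‖v‖ ≤ ∑ i, ‖v i‖ := by
  rw [EuclideanSpace.norm_eq]
  calc Real.sqrt (∑ i, ‖v i‖ ^ 2) ≤ Real.sqrt ((∑ i, ‖v i‖) ^ 2) :=
        Real.sqrt_le_sqrt (Finset.sum_sq_le_sq_sum_of_nonneg fun i _ => norm_nonneg _)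
    _ = ∑ i, ‖v i‖ := Real.sqrt_sq (Finset.sum_nonneg fun i _ => norm_nonneg _)

lemma J_base_lt_top (μ : VM α N) : J μ μ.base < ⊤ := by
  have hb : ∀ i : Fin N, ∫⁻ x, (‖(μ i).rnDeriv μ.base x‖₊ : ℝ≥0∞) ∂μ.base < ⊤ :=
    fun i => (SignedMeasure.integrable_rnDeriv (μ i) μ.base).2
  calc J μ μ.base ≤ ∫⁻ x, ∑ i, (‖(μ i).rnDeriv μ.base x‖₊ : ℝ≥0∞) ∂μ.base := by
        refine lintegral_mono fun x => ?_
        rw [← ENNReal.coe_finset_sum, ENNReal.coe_le_coe]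
        have := eucN_norm_le_sum (densA μ μ.base x)
        rw [← NNReal.coe_le_coe]
        push_cast
        simpa [densA] using this
    _ = ∑ i, ∫⁻ x, (‖(μ i).rnDeriv μ.base x‖₊ : ℝ≥0∞) ∂μ.base :=
        lintegral_finset_sum _ fun i _ =>
          (SignedMeasure.measurable_rnDeriv (μ i) μ.base).nnnorm.coe_nnreal_ennreal
    _ < ⊤ := ENNReal.sum_lt_top.mpr fun i _ => hb i

lemma tv_nonneg (μ : VM α N) : 0 ≤ μ.tv := ENNReal.toReal_nonneg

lemma tv_smul (c : ℝ) (μ : VM α N) : (c • μ).tv = |c| * μ.tv := by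
  set τ := μ.base + (c • μ).base with hτ
  have h1 : μ.base ≪ τ := Measure.absolutelyContinuous_of_le (Measure.le_add_right le_rfl)
  have h2 : (c • μ).base ≪ τ := Measure.absolutelyContinuous_of_le (Measure.le_add_left le_rfl)
  have key : J (c • μ) τ = (‖c‖₊ : ℝ≥0∞) * J μ τ := by
    have hchain : ∀ᵐ x ∂τ, ∀ i : Fin N,
        ((c • μ) i).rnDeriv τ x = c • (μ i).rnDeriv τ x := by
      rw [MeasureTheory.ae_all_iff]
      intro i
      exact SignedMeasure.rnDeriv_smul (μ i) τ c
    rw [J, J, ← lintegral_const_mul _ (measurable_Jfun μ τ)]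
    refine lintegral_congr_ae ?_
    filter_upwards [hchain] with x hx
    have h3 : densA (c • μ) τ x = c • densA μ τ x := by
      ext i
      exact hx i
    rw [h3, nnnorm_smul, ENNReal.coe_mul]
  rw [tv_eq_J, tv_eq_J, ← J_eq (c • μ) τ h2, ← J_eq μ τ h1, key, ENNReal.toReal_mul]
  simp

lemma tv_add_le (μ ν : VM α N) : (μ + ν).tv ≤ μ.tv + ν.tv := by
  set τ := μ.base + ν.base + (μ + ν).base with hτ
  have h1 : μ.base ≪ τ := Measure.absolutelyContinuous_of_le
    ((Measure.le_add_right le_rfl).trans (Measure.le_add_right le_rfl))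
  have h2 : ν.base ≪ τ := Measure.absolutelyContinuous_of_le
    ((Measure.le_add_left le_rfl).trans (Measure.le_add_right le_rfl))
  have h3 : (μ + ν).base ≪ τ := Measure.absolutelyContinuous_of_le (Measure.le_add_left le_rfl)
  have key : J (μ + ν) τ ≤ J μ τ + J ν τ := by
    have hchain : ∀ᵐ x ∂τ, ∀ i : Fin N,
        ((μ + ν) i).rnDeriv τ x = (μ i).rnDeriv τ x + (ν i).rnDeriv τ x := by
      rw [MeasureTheory.ae_all_iff]
      intro i
      exact SignedMeasure.rnDeriv_add (μ i) (ν i) τ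
    rw [J, J, J, ← lintegral_add_left (measurable_Jfun μ τ)]
    refine lintegral_mono_ae ?_
    filter_upwards [hchain] with x hx
    have h4 : densA (μ + ν) τ x = densA μ τ x + densA ν τ x := by
      ext i
      exact hx i
    rw [h4, ← ENNReal.coe_add, ENNReal.coe_le_coe]
    exact nnnorm_add_le _ _
  have hμτ : J μ τ ≠ ⊤ := by rw [J_eq μ τ h1]; exact (J_base_lt_top μ).ne
  have hντ : J ν τ ≠ ⊤ := by rw [J_eq ν τ h2]; exact (J_base_lt_top ν).ne
  rw [tv_eq_J, tv_eq_J, tv_eq_J, ← J_eq (μ + ν) τ h3, ← J_eq μ τ h1, ← J_eq ν τ h2,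
    ← ENNReal.toReal_add hμτ hντ]
  exact ENNReal.toReal_mono (by rw [ENNReal.add_ne_top]; exact ⟨hμτ, hντ⟩) key

end VM

/-- The regularized criterion `𝓕_{λ,f}(μ) = ‖f − Aμ‖² + λ‖μ‖_TV`. -/
noncomputable def Gcrit {M N : ℕ} {S : Set (EucN M)} {H : Type}
    [NormedAddCommGroup H] [InnerProductSpace ℝ H]
    (A : VM S N →ₗ[ℝ] H) (f : H) (l : ℝ) (μ : VM S N) : ℝ :=
  ‖f - A μ‖ ^ 2 + l * μ.tv


private lemma aux_le {C a b : ℝ} (hC : 0 ≤ C) (h : ∀ t : ℝ, 0 < t → t < 1 → a ≤ t * C + b) :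
    a ≤ b := by
  refine le_of_forall_pos_le_add fun ε hε => ?_
  have hC1 : (0:ℝ) < C + 1 := by linarith
  set t := min (ε / (C + 1)) (1/2) with ht
  have htpos : 0 < t := lt_min (by positivity) (by norm_num)
  have ht1 : t < 1 := lt_of_le_of_lt (min_le_right _ _) (by norm_num)
  have h1 := h t htpos ht1
  have h2 : t * C ≤ ε := by
    have : t ≤ ε / (C + 1) := min_le_left _ _
    have h3 : t * C ≤ (ε / (C + 1)) * C :=
      mul_le_mul_of_nonneg_right this hC
    have h4 : (ε / (C + 1)) * C ≤ ε := by
      rw [div_mul_eq_mul_div, div_le_iff₀ hC1]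
      nlinarith
    linarith
  linarith

/-- Critical-point characterization: `μ ∈ V` minimizes `‖f − Aν‖² + λ‖ν‖_TV` over a
TV-closed subspace `V` iff `⟨μ, A*(f − Aμ)⟩ = (λ/2)‖μ‖_TV` and
`|⟨ν, A*(f − Aμ)⟩| ≤ (λ/2)‖ν‖_TV` for all `ν ∈ V`. -/
theorem stmt8 {M N : ℕ} (S : Set (EucN M)) (hS : IsCompact S)
    {H : Type} [NormedAddCommGroup H] [InnerProductSpace ℝ H] [CompleteSpace H]
    (A : VM S N →ₗ[ℝ] H) (Astar : H → C(S, EucN N))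
    (hadj : ∀ (μ : VM S N) (g : H), ⟪A μ, g⟫ = μ.pair (Astar g))
    (V : Submodule ℝ (VM S N))
    (hVcl : ∀ (μk : ℕ → VM S N) (μ₀ : VM S N), (∀ k, μk k ∈ V) →
      Tendsto (fun k => (μk k - μ₀).tv) atTop (𝓝 0) → μ₀ ∈ V)
    (l : ℝ) (hl : 0 < l) (f : H) (μ : VM S N) (hμV : μ ∈ V) :
    (∀ ν ∈ V, Gcrit A f l μ ≤ Gcrit A f l ν) ↔
      (μ.pair (Astar (f - A μ)) = l / 2 * μ.tv ∧
        ∀ ν ∈ V, |VM.pair ν (Astar (f - A μ))| ≤ l / 2 * ν.tv) := by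
  set g := f - A μ with hg
  have expand : ∀ (ν : VM S N) (t : ℝ), Gcrit A f l (μ + t • ν) =
      ‖g‖ ^ 2 - 2 * t * ⟪A ν, g⟫ + t ^ 2 * ‖A ν‖ ^ 2 + l * (μ + t • ν).tv := by
    intro ν t
    rw [Gcrit]
    congr 1
    have hA : f - A (μ + t • ν) = g - t • A ν := by
      rw [map_add, LinearMap.map_smul, hg]; abel
    rw [hA, norm_sub_sq_real, real_inner_smul_right, real_inner_comm, norm_smul]
    simp only [Real.norm_eq_abs]
    rw [mul_pow, sq_abs]
    ring
  have hGμ : Gcrit A f l μ = ‖g‖ ^ 2 + l * μ.tv := by rw [Gcrit, ← hg]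
  constructor
  · intro hmin
    have cond2 : ∀ ν ∈ V, |⟪A ν, g⟫| ≤ l / 2 * ν.tv := by
      intro ν hν
      have key : ∀ t : ℝ, 2 * t * ⟪A ν, g⟫ ≤ t ^ 2 * ‖A ν‖ ^ 2 + l * |t| * ν.tv := by
        intro t
        have h1 := hmin _ (V.add_mem hμV (V.smul_mem t hν))
        rw [expand ν t, hGμ] at h1
        have h2 : (μ + t • ν).tv ≤ μ.tv + |t| * ν.tv :=
          (VM.tv_add_le μ (t • ν)).trans (by rw [VM.tv_smul])
        nlinarith [hl.le, h1, h2]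
      have hub : 2 * ⟪A ν, g⟫ ≤ l * ν.tv := by
        refine aux_le (C := ‖A ν‖ ^ 2) (by positivity) fun t ht ht1 => ?_
        have := key t
        rw [abs_of_pos ht] at this
        nlinarith
      have hlb : -(2 * ⟪A ν, g⟫) ≤ l * ν.tv := by
        refine aux_le (C := ‖A ν‖ ^ 2) (by positivity) fun t ht ht1 => ?_
        have := key (-t)
        rw [abs_neg, abs_of_pos ht] at this
        nlinarith
      rw [abs_le]
      constructor <;> linarith
    have cond1 : ⟪A μ, g⟫ = l / 2 * μ.tv := by
      have hub : ⟪A μ, g⟫ ≤ l / 2 * μ.tv := (le_abs_self _).trans (cond2 μ hμV)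
      have hlb : l * μ.tv ≤ 2 * ⟪A μ, g⟫ := by
        refine aux_le (C := ‖A μ‖ ^ 2) (by positivity) fun s hs hs1 => ?_
        have h1 := hmin _ (V.add_mem hμV (V.smul_mem (-s) hμV))
        rw [expand μ (-s), hGμ] at h1
        have hμs : μ + (-s) • μ = (1 - s) • μ := by module
        have htv : (μ + (-s) • μ).tv = (1 - s) * μ.tv := by
          rw [hμs, VM.tv_smul, abs_of_pos (by linarith)]
        rw [htv] at h1
        nlinarith
      linarith
    refine ⟨?_, fun ν hν => ?_⟩
    · rw [← hadj μ g]; exact cond1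
    · rw [← hadj ν g]; exact cond2 ν hν
  · rintro ⟨h1, h2⟩ ν hν
    have hπμ : ⟪A μ, g⟫ = l / 2 * μ.tv := by rw [hadj μ g]; exact h1
    have hπν : ⟪A ν, g⟫ ≤ l / 2 * ν.tv := by
      have := h2 ν hν
      rw [← hadj ν g] at this
      exact (le_abs_self _).trans this
    have hw : ‖f - A ν‖ ^ 2 = ‖g‖ ^ 2 - 2 * (⟪A ν, g⟫ - ⟪A μ, g⟫) + ‖A ν - A μ‖ ^ 2 := by
      have hA : f - A ν = g - (A ν - A μ) := by rw [hg]; abel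
      rw [hA, norm_sub_sq_real, real_inner_comm, inner_sub_left]
    rw [hGμ, Gcrit, hw]
    nlinarith [sq_nonneg ‖A ν - A μ‖, hπμ, hπν]
end

section
/- Let V be a GSM space generated by {ν_k}, let μ^V_λ minimize F_{f,λ} over V and μ_λ minimize F_{f,λ} over M(S)^N; set g^V_λ = |A*(f − A μ^V_λ)| and g_λ = |A*(f − A μ_λ)| on S. If ‖g^V_λ − g_λ‖_{L^∞(S)} < ε and g_λ(x) < λ/2 − ε for ν_k-a.e. x for some index k, then the coefficient m_k of μ^V_λ = Σ_j m_j ν_j vanishes: m_k = 0. -/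
open MeasureTheory Filter Topology Metric
open scoped RealInnerProductSpace ENNReal

section GSM
variable {α : Type} [MeasurableSpace α] {N : ℕ}

lemma coord_le_norm (v : EucN N) (i : Fin N) : |v i| ≤ ‖v‖ := by
  have h1 : |⟪EuclideanSpace.single i (1:ℝ), v⟫| ≤ ‖EuclideanSpace.single i (1:ℝ)‖ * ‖v‖ :=
    abs_real_inner_le_norm _ _
  rw [EuclideanSpace.inner_single_left, EuclideanSpace.norm_single] at h1
  simpa using h1

lemma gsm_finite (ν : ℕ → Measure α) [hν : ∀ k, IsProbabilityMeasure (ν k)]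
    (c b : ℕ → ℝ) (hb : Summable b) (hb0 : ∀ k, 0 ≤ b k) (hcb : ∀ k, c k ≤ b k) :
    IsFiniteMeasure (Measure.sum fun k => ENNReal.ofReal (c k) • ν k) := by
  constructor
  rw [Measure.sum_apply _ MeasurableSet.univ]
  calc ∑' k, (ENNReal.ofReal (c k) • ν k) Set.univ
      ≤ ∑' k, ENNReal.ofReal (b k) := by
        refine ENNReal.tsum_le_tsum fun k => ?_
        rw [Measure.smul_apply, measure_univ, smul_eq_mul, mul_one]
        exact ENNReal.ofReal_le_ofReal (hcb k)
    _ < ⊤ := by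
        rw [← ENNReal.ofReal_tsum_of_nonneg hb0 hb]
        exact ENNReal.ofReal_lt_top

/-- The vector measure `Σ_k m_k ν_k` generated by coefficients `m_k ∈ ℝ^N`
(with `Σ_k |m_k| < ∞`) and the probability measures `ν_k`; its positive and
negative parts in each coordinate are the indicated sums. -/
noncomputable def gsm (m : ℕ → EucN N) (ν : ℕ → Measure α)
    [hν : ∀ k, IsProbabilityMeasure (ν k)] (hm : Summable fun k => ‖m k‖) : VM α N :=
  fun i =>
    (@Measure.toSignedMeasure _ _ (Measure.sum fun k => ENNReal.ofReal (max (m k i) 0) • ν k)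
        (gsm_finite ν _ _ hm (fun _ => norm_nonneg _)
          (fun k => max_le ((le_abs_self _).trans (coord_le_norm (m k) i)) (norm_nonneg _))))
    - (@Measure.toSignedMeasure _ _ (Measure.sum fun k => ENNReal.ofReal (max (-(m k i)) 0) • ν k)
        (gsm_finite ν _ _ hm (fun _ => norm_nonneg _)
          (fun k => max_le ((neg_le_abs _).trans (coord_le_norm (m k) i)) (norm_nonneg _))))

end GSM

section Carriers
variable {α : Type} [MeasurableSpace α]

lemma exists_carriers (ν : ℕ → MeasureTheory.Measure α)
    (hsing : Pairwise fun k j => MeasureTheory.Measure.MutuallySingular (ν k) (ν j)) :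
    ∃ D : ℕ → Set α, (∀ k, MeasurableSet (D k)) ∧ Pairwise (Function.onFun Disjoint D) ∧
      (∀ k, ν k (D k)ᶜ = 0) ∧ ∀ k j, j ≠ k → ν j (D k) = 0 := by
  classical
  set E : ℕ → Set α := fun k => ⋂ j, if h : j ≠ k then (hsing h).nullSet else Set.univ with hE
  have hEmeas : ∀ k, MeasurableSet (E k) := by
    intro k
    refine MeasurableSet.iInter fun j => ?_
    by_cases h : j ≠ k
    · rw [dif_pos h]; exact (hsing h).measurableSet_nullSet
    · rw [dif_neg h]; exact MeasurableSet.univ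
  have hEnull : ∀ k j, j ≠ k → ν j (E k) = 0 := by
    intro k j h
    refine MeasureTheory.measure_mono_null ?_ (hsing h).measure_nullSet
    intro x hx
    have := Set.mem_iInter.1 hx j
    simpa [h] using this
  have hEco : ∀ k, ν k (E k)ᶜ = 0 := by
    intro k
    rw [Set.compl_iInter]
    refine MeasureTheory.measure_iUnion_null fun j => ?_
    by_cases h : j ≠ k
    · rw [dif_pos h]; exact (hsing h).measure_compl_nullSet
    · rw [dif_neg h]; simp
  refine ⟨disjointed E, MeasurableSet.disjointed hEmeas, disjoint_disjointed E, ?_, ?_⟩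
  · intro k
    have hsub : (disjointed E k)ᶜ ⊆ (E k)ᶜ ∪ ⋃ (j : ℕ) (_ : j < k), E j := by
      intro x hx
      by_cases hxE : x ∈ E k
      · right
        by_contra hno
        apply hx
        rw [disjointed_eq_inter_compl]
        refine ⟨hxE, ?_⟩
        simp only [Set.mem_iUnion, not_exists] at hno
        simp only [Set.compl_iUnion, Set.mem_iInter]
        intro j hj
        exact fun hxj => hno j hj hxj
      · exact Or.inl hxE
    refine MeasureTheory.measure_mono_null hsub (MeasureTheory.measure_union_null (hEco k) ?_)
    refine MeasureTheory.measure_iUnion_null fun j => ?_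
    refine MeasureTheory.measure_iUnion_null fun hj => ?_
    exact hEnull j k hj.ne'
  · intro k j h
    exact MeasureTheory.measure_mono_null (disjointed_subset E k) (hEnull k j h)
end Carriers
section Dev
variable {α : Type} [MeasurableSpace α] {N : ℕ}
variable (ν : ℕ → Measure α) [hν : ∀ k, IsProbabilityMeasure (ν k)]

lemma norm_le_l1 (v : EucN N) : ‖v‖ ≤ ∑ i, |v i| := by
  have h : ‖v‖ = Real.sqrt (∑ i, v i ^ 2) := by
    rw [EuclideanSpace.norm_eq]
    congr 1
    refine Finset.sum_congr rfl fun i _ => ?_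
    rw [Real.norm_eq_abs, sq_abs]
  rw [h]
  have h2 : (∑ i, v i ^ 2) ≤ (∑ i, |v i|) ^ 2 := by
    calc ∑ i, v i ^ 2 = ∑ i, |v i| ^ 2 := by
          refine Finset.sum_congr rfl fun i _ => (sq_abs _).symm
      _ ≤ (∑ i, |v i|) ^ 2 := Finset.sum_sq_le_sq_sum_of_nonneg fun i _ => abs_nonneg _
  calc Real.sqrt (∑ i, v i ^ 2) ≤ Real.sqrt ((∑ i, |v i|) ^ 2) := Real.sqrt_le_sqrt h2
    _ = ∑ i, |v i| := Real.sqrt_sq (Finset.sum_nonneg fun i _ => abs_nonneg _)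

lemma l1_le_norm (v : EucN N) : (∑ i, |v i|) ≤ N * ‖v‖ := by
  calc (∑ i, |v i|) ≤ ∑ _i : Fin N, ‖v‖ := Finset.sum_le_sum fun i _ => coord_le_norm v i
    _ = N * ‖v‖ := by simp [Finset.sum_const, nsmul_eq_mul]

lemma summable_l1 {m : ℕ → EucN N} (hm : Summable fun k => ‖m k‖) :
    Summable fun k => ∑ i, |m k i| :=
  Summable.of_nonneg_of_le (fun k => Finset.sum_nonneg fun i _ => abs_nonneg _)
    (fun k => l1_le_norm (m k)) (hm.mul_left (N : ℝ))

lemma gsm_jordan (m : ℕ → EucN N) (hm : Summable fun k => ‖m k‖)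
    (D : ℕ → Set α) (hDm : ∀ k, MeasurableSet (D k))
    (hDc : ∀ k, ν k (D k)ᶜ = 0)
    (hDn : ∀ k j, j ≠ k → ν j (D k) = 0) (i : Fin N) :
    (gsm m ν hm i).toJordanDecomposition.posPart
        = (Measure.sum fun k => ENNReal.ofReal (max (m k i) 0) • ν k) ∧
      (gsm m ν hm i).toJordanDecomposition.negPart
        = (Measure.sum fun k => ENNReal.ofReal (max (-(m k i)) 0) • ν k) := by
  classical
  haveI h1 : IsFiniteMeasure (Measure.sum fun k => ENNReal.ofReal (max (m k i) 0) • ν k) :=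
    gsm_finite ν _ _ hm (fun _ => norm_nonneg _)
      (fun k => max_le ((le_abs_self _).trans (coord_le_norm (m k) i)) (norm_nonneg _))
  haveI h2 : IsFiniteMeasure (Measure.sum fun k => ENNReal.ofReal (max (-(m k i)) 0) • ν k) :=
    gsm_finite ν _ _ hm (fun _ => norm_nonneg _)
      (fun k => max_le ((neg_le_abs _).trans (coord_le_norm (m k) i)) (norm_nonneg _))
  set s : Set α := ⋃ k, (if m k i < 0 then D k else ∅) with hs
  have hsm : MeasurableSet s := by
    refine MeasurableSet.iUnion fun k => ?_
    split <;> simp [hDm k]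
  have hsing : (Measure.sum fun k => ENNReal.ofReal (max (m k i) 0) • ν k).MutuallySingular
      (Measure.sum fun k => ENNReal.ofReal (max (-(m k i)) 0) • ν k) := by
    refine ⟨s, hsm, ?_, ?_⟩
    · rw [Measure.sum_apply _ hsm]
      refine ENNReal.tsum_eq_zero.2 fun k => ?_
      rw [Measure.smul_apply, smul_eq_mul]
      by_cases hk : m k i < 0
      · have : max (m k i) 0 = 0 := max_eq_right hk.le
        simp [this]
      · have : ν k s = 0 := by
          refine measure_iUnion_null fun j => ?_
          split
          · rename_i hj
            have : j ≠ k := fun h => hk (h ▸ ‹m j i < 0›)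
            exact hDn j k (Ne.symm this)
          · simp
        simp [this]
    · rw [Measure.sum_apply _ hsm.compl]
      refine ENNReal.tsum_eq_zero.2 fun k => ?_
      rw [Measure.smul_apply, smul_eq_mul]
      by_cases hk : m k i < 0
      · have hsub : D k ⊆ s := by
          intro x hx
          exact Set.mem_iUnion.2 ⟨k, by simp [hk, hx]⟩
        have : ν k sᶜ = 0 :=
          measure_mono_null (Set.compl_subset_compl.2 hsub) (hDc k)
        simp [this]
      · have : max (-(m k i)) 0 = 0 := max_eq_right (by linarith [not_lt.1 hk])
        simp [this]
  have hJ : (gsm m ν hm i).toJordanDecomposition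
      = JordanDecomposition.mk _ _ hsing :=
    SignedMeasure.toJordanDecomposition_eq rfl
  rw [hJ]
  exact ⟨rfl, rfl⟩

lemma gsm_totalVariation (m : ℕ → EucN N) (hm : Summable fun k => ‖m k‖)
    (D : ℕ → Set α) (hDm : ∀ k, MeasurableSet (D k))
    (hDc : ∀ k, ν k (D k)ᶜ = 0)
    (hDn : ∀ k j, j ≠ k → ν j (D k) = 0) (i : Fin N) :
    (gsm m ν hm i).totalVariation
      = (Measure.sum fun k => ENNReal.ofReal (max (m k i) 0) • ν k)
        + (Measure.sum fun k => ENNReal.ofReal (max (-(m k i)) 0) • ν k) := by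
  obtain ⟨hp, hn⟩ := gsm_jordan ν m hm D hDm hDc hDn i
  rw [SignedMeasure.totalVariation, hp, hn]

lemma gsm_base (m : ℕ → EucN N) (hm : Summable fun k => ‖m k‖)
    (D : ℕ → Set α) (hDm : ∀ k, MeasurableSet (D k))
    (hDc : ∀ k, ν k (D k)ᶜ = 0)
    (hDn : ∀ k j, j ≠ k → ν j (D k) = 0) :
    (gsm m ν hm).base
      = Measure.sum fun k => ENNReal.ofReal (∑ i, |m k i|) • ν k := by
  ext E hE
  rw [VM.base, Measure.finset_sum_apply, Measure.sum_apply _ hE]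
  calc ∑ i, (gsm m ν hm i).totalVariation E
      = ∑ i : Fin N, ∑' k, (ENNReal.ofReal (max (m k i) 0) * ν k E
          + ENNReal.ofReal (max (-(m k i)) 0) * ν k E) := by
        refine Finset.sum_congr rfl fun i _ => ?_
        rw [gsm_totalVariation ν m hm D hDm hDc hDn i, Measure.add_apply,
          Measure.sum_apply _ hE, Measure.sum_apply _ hE, ← ENNReal.tsum_add]
        congr 1
    _ = ∑' k, ∑ i : Fin N, (ENNReal.ofReal (max (m k i) 0) * ν k E
          + ENNReal.ofReal (max (-(m k i)) 0) * ν k E) := by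
        rw [← tsum_fintype (L := SummationFilter.unconditional _), ENNReal.tsum_comm]
        exact tsum_congr fun k => tsum_fintype _
    _ = ∑' k, (ENNReal.ofReal (∑ i, |m k i|) • ν k) E := by
        refine tsum_congr fun k => ?_
        rw [Measure.smul_apply, smul_eq_mul]
        simp_rw [← add_mul]
        rw [← Finset.sum_mul]
        congr 1
        rw [ENNReal.ofReal_sum_of_nonneg fun i _ => abs_nonneg _]
        refine Finset.sum_congr rfl fun i _ => ?_
        rw [← ENNReal.ofReal_add (le_max_right _ _) (le_max_right _ _)]
        congr 1
        rcases le_or_gt 0 (m k i) with h | h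
        · rw [max_eq_left h, max_eq_right (by linarith), abs_of_nonneg h, add_zero]
        · rw [max_eq_right h.le, max_eq_left (by linarith), abs_of_neg h, zero_add]

end Dev
section Dev2
variable {α : Type} [MeasurableSpace α] {N : ℕ}
variable (ν : ℕ → Measure α) [hν : ∀ k, IsProbabilityMeasure (ν k)]

lemma gsm_base_finite (m : ℕ → EucN N) (hm : Summable fun k => ‖m k‖)
    (D : ℕ → Set α) (hDm : ∀ k, MeasurableSet (D k))
    (hDc : ∀ k, ν k (D k)ᶜ = 0)
    (hDn : ∀ k j, j ≠ k → ν j (D k) = 0) :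
    IsFiniteMeasure ((gsm m ν hm).base) := by
  rw [gsm_base ν m hm D hDm hDc hDn]
  exact gsm_finite ν _ (fun k => (N : ℝ) * ‖m k‖) (hm.mul_left _)
    (fun k => mul_nonneg (Nat.cast_nonneg _) (norm_nonneg _)) (fun k => l1_le_norm (m k))

lemma measure_inter_carrier {μ : Measure α} {T E : Set α} (hT : MeasurableSet T)
    (hTc : μ Tᶜ = 0) : μ (E ∩ T) = μ E := by
  refine le_antisymm (measure_mono Set.inter_subset_left) ?_
  calc μ E = μ (E ∩ T) + μ (E \ T) := (measure_inter_add_diff E hT).symm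
    _ ≤ μ (E ∩ T) + 0 := by
        gcongr
        exact (measure_mono_null (Set.diff_subset_compl E T) hTc).le
    _ = μ (E ∩ T) := add_zero _

lemma gsm_base_inter (m : ℕ → EucN N) (hm : Summable fun k => ‖m k‖)
    (D : ℕ → Set α) (hDm : ∀ k, MeasurableSet (D k))
    (hDc : ∀ k, ν k (D k)ᶜ = 0)
    (hDn : ∀ k j, j ≠ k → ν j (D k) = 0) (k : ℕ) {E : Set α} (hE : MeasurableSet E) :
    (gsm m ν hm).base (E ∩ D k) = ENNReal.ofReal (∑ i, |m k i|) * ν k E := by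
  rw [gsm_base ν m hm D hDm hDc hDn, Measure.sum_apply _ (hE.inter (hDm k))]
  rw [tsum_eq_single k]
  · rw [Measure.smul_apply, smul_eq_mul, measure_inter_carrier (hDm k) (hDc k)]
  · intro j hj
    rw [Measure.smul_apply, smul_eq_mul,
      measure_mono_null Set.inter_subset_right (hDn k j hj), mul_zero]

/-- Auxiliary density function. -/
noncomputable def gdens (p : ℕ → ℝ) (c : ℕ → ℝ) (D : ℕ → Set α) : α → ℝ≥0∞ :=
  fun x => ∑' k, (D k).indicator (fun _ => ENNReal.ofReal (p k / c k)) x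

lemma gdens_measurable (p c : ℕ → ℝ) (D : ℕ → Set α) (hDm : ∀ k, MeasurableSet (D k)) :
    Measurable (gdens p c D) :=
  Measurable.ennreal_tsum fun k => (measurable_const.indicator (hDm k))

lemma gdens_eq_on (p c : ℕ → ℝ) (D : ℕ → Set α)
    (hdisj : Pairwise (Function.onFun Disjoint D)) {k : ℕ} {x : α} (hx : x ∈ D k) :
    gdens p c D x = ENNReal.ofReal (p k / c k) := by
  rw [gdens, tsum_eq_single k]
  · simp [hx]
  · intro j hj
    have : x ∉ D j := fun hxj => (hdisj hj).le_bot ⟨hxj, hx⟩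
    simp [this]

lemma gsm_withDensity (m : ℕ → EucN N) (hm : Summable fun k => ‖m k‖)
    (D : ℕ → Set α) (hDm : ∀ k, MeasurableSet (D k))
    (hdisj : Pairwise (Function.onFun Disjoint D))
    (hDc : ∀ k, ν k (D k)ᶜ = 0)
    (hDn : ∀ k j, j ≠ k → ν j (D k) = 0)
    (p : ℕ → ℝ) (hp0 : ∀ k, 0 ≤ p k) (hple : ∀ k, p k ≤ ∑ i, |m k i|) :
    (Measure.sum fun k => ENNReal.ofReal (p k) • ν k)
      = (gsm m ν hm).base.withDensity (gdens p (fun k => ∑ i, |m k i|) D) := by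
  ext E hE
  rw [withDensity_apply _ hE, Measure.sum_apply _ hE]
  have hmeas : ∀ k : ℕ, Measurable fun x =>
      (D k).indicator (fun _ => ENNReal.ofReal (p k / (∑ i, |m k i|))) x :=
    fun k => measurable_const.indicator (hDm k)
  rw [show (gdens p (fun k => ∑ i, |m k i|) D) = fun x => ∑' k,
      (D k).indicator (fun _ => ENNReal.ofReal (p k / (∑ i, |m k i|))) x from rfl]
  rw [lintegral_tsum fun k => (hmeas k).aemeasurable]
  refine tsum_congr fun k => ?_
  rw [lintegral_indicator (hDm k) _, Measure.restrict_restrict (hDm k),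
    setLIntegral_const,
    Set.inter_comm (D k) E, gsm_base_inter ν m hm D hDm hDc hDn k hE,
    Measure.smul_apply, smul_eq_mul]
  set c := ∑ i, |m k i| with hc
  rcases eq_or_lt_of_le (Finset.sum_nonneg fun i _ => abs_nonneg _ : (0:ℝ) ≤ c) with h0 | h0
  · have hpk : p k = 0 := le_antisymm (h0 ▸ hple k) (hp0 k)
    simp [hpk, ← h0]
  · rw [← mul_assoc, ← ENNReal.ofReal_mul (div_nonneg (hp0 k) h0.le),
      div_mul_cancel₀ _ (ne_of_gt h0)]
end Dev2
section Dev3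
variable {α : Type} [MeasurableSpace α] {N : ℕ}
variable (ν : ℕ → Measure α) [hν : ∀ k, IsProbabilityMeasure (ν k)]

lemma gsm_dens_ae (m : ℕ → EucN N) (hm : Summable fun k => ‖m k‖)
    (D : ℕ → Set α) (hDm : ∀ k, MeasurableSet (D k))
    (hdisj : Pairwise (Function.onFun Disjoint D))
    (hDc : ∀ k, ν k (D k)ᶜ = 0)
    (hDn : ∀ k j, j ≠ k → ν j (D k) = 0) (k : ℕ) :
    ∀ᵐ x ∂((gsm m ν hm).base.restrict (D k)),
      (gsm m ν hm).dens x = (∑ i, |m k i|)⁻¹ • m k := by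
  haveI := gsm_base_finite ν m hm D hDm hDc hDn
  have hple : ∀ (i : Fin N) (k' : ℕ), max (m k' i) 0 ≤ ∑ i', |m k' i'| := fun i k' =>
    max_le ((le_abs_self _).trans (Finset.single_le_sum
      (fun j (_ : j ∈ Finset.univ) => abs_nonneg (m k' j)) (Finset.mem_univ i)))
      (Finset.sum_nonneg fun j _ => abs_nonneg _)
  have hplen : ∀ (i : Fin N) (k' : ℕ), max (-(m k' i)) 0 ≤ ∑ i', |m k' i'| := fun i k' =>
    max_le ((neg_le_abs _).trans (Finset.single_le_sum
      (fun j (_ : j ∈ Finset.univ) => abs_nonneg (m k' j)) (Finset.mem_univ i)))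
      (Finset.sum_nonneg fun j _ => abs_nonneg _)
  have hpos : ∀ i : Fin N,
      (Measure.sum fun k' => ENNReal.ofReal (max (m k' i) 0) • ν k').rnDeriv (gsm m ν hm).base
        =ᵐ[(gsm m ν hm).base]
          gdens (fun k' => max (m k' i) 0) (fun k' => ∑ i', |m k' i'|) D := by
    intro i
    rw [gsm_withDensity ν m hm D hDm hdisj hDc hDn _ (fun k' => le_max_right _ _) (hple i)]
    exact Measure.rnDeriv_withDensity _ (gdens_measurable _ _ D hDm)
  have hneg : ∀ i : Fin N,
      (Measure.sum fun k' => ENNReal.ofReal (max (-(m k' i)) 0) • ν k').rnDeriv (gsm m ν hm).base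
        =ᵐ[(gsm m ν hm).base]
          gdens (fun k' => max (-(m k' i)) 0) (fun k' => ∑ i', |m k' i'|) D := by
    intro i
    rw [gsm_withDensity ν m hm D hDm hdisj hDc hDn _ (fun k' => le_max_right _ _) (hplen i)]
    exact Measure.rnDeriv_withDensity _ (gdens_measurable _ _ D hDm)
  have hae : ∀ᵐ x ∂((gsm m ν hm).base), ∀ i : Fin N,
      (gsm m ν hm i).rnDeriv (gsm m ν hm).base x
        = (gdens (fun k' => max (m k' i) 0) (fun k' => ∑ i', |m k' i'|) D x).toReal
          - (gdens (fun k' => max (-(m k' i)) 0) (fun k' => ∑ i', |m k' i'|) D x).toReal := by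
    rw [MeasureTheory.ae_all_iff]
    intro i
    filter_upwards [hpos i, hneg i] with x hx1 hx2
    have hdef : (gsm m ν hm i).rnDeriv (gsm m ν hm).base x
        = ((gsm m ν hm i).toJordanDecomposition.posPart.rnDeriv (gsm m ν hm).base x).toReal
          - ((gsm m ν hm i).toJordanDecomposition.negPart.rnDeriv
              (gsm m ν hm).base x).toReal := rfl
    rw [hdef, (gsm_jordan ν m hm D hDm hDc hDn i).1, (gsm_jordan ν m hm D hDm hDc hDn i).2,
      hx1, hx2]
  filter_upwards [ae_restrict_of_ae hae, ae_restrict_mem (hDm k)] with x hx hxD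
  ext i
  have hdi : (gsm m ν hm).dens x i = (gsm m ν hm i).rnDeriv (gsm m ν hm).base x := rfl
  rw [hdi, hx i, gdens_eq_on _ _ D hdisj hxD, gdens_eq_on _ _ D hdisj hxD,
    ENNReal.toReal_ofReal (div_nonneg (le_max_right _ _)
      (Finset.sum_nonneg fun j _ => abs_nonneg _)),
    ENNReal.toReal_ofReal (div_nonneg (le_max_right _ _)
      (Finset.sum_nonneg fun j _ => abs_nonneg _)),
    div_sub_div_same, max_zero_sub_max_neg_zero_eq_self]
  simp [div_eq_inv_mul]

lemma gsm_lintegral_dens (m : ℕ → EucN N) (hm : Summable fun k => ‖m k‖)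
    (D : ℕ → Set α) (hDm : ∀ k, MeasurableSet (D k))
    (hdisj : Pairwise (Function.onFun Disjoint D))
    (hDc : ∀ k, ν k (D k)ᶜ = 0)
    (hDn : ∀ k j, j ≠ k → ν j (D k) = 0) :
    ∫⁻ x, ‖(gsm m ν hm).dens x‖₊ ∂(gsm m ν hm).base = ENNReal.ofReal (∑' k, ‖m k‖) := by
  have huni : (gsm m ν hm).base ((⋃ j, D j)ᶜ) = 0 := by
    rw [gsm_base ν m hm D hDm hDc hDn, Measure.sum_apply _ (MeasurableSet.iUnion hDm).compl]
    refine ENNReal.tsum_eq_zero.2 fun j => ?_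
    rw [Measure.smul_apply, smul_eq_mul,
      measure_mono_null (Set.compl_subset_compl.2 (Set.subset_iUnion D j)) (hDc j), mul_zero]
  have hres : (gsm m ν hm).base.restrict (⋃ j, D j) = (gsm m ν hm).base :=
    Measure.restrict_eq_self_of_ae_mem (mem_ae_iff.2 huni)
  calc ∫⁻ x, ‖(gsm m ν hm).dens x‖₊ ∂(gsm m ν hm).base
      = ∫⁻ x in ⋃ j, D j, ‖(gsm m ν hm).dens x‖₊ ∂(gsm m ν hm).base := by rw [hres]
    _ = ∑' k, ∫⁻ x in D k, ‖(gsm m ν hm).dens x‖₊ ∂(gsm m ν hm).base :=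
        lintegral_iUnion hDm hdisj _
    _ = ∑' k, ENNReal.ofReal ‖m k‖ := by
        refine tsum_congr fun k => ?_
        have hcongr : ∫⁻ x in D k, ‖(gsm m ν hm).dens x‖₊ ∂(gsm m ν hm).base
            = ∫⁻ _ in D k, (‖(∑ i, |m k i|)⁻¹ • m k‖₊ : ℝ≥0∞) ∂(gsm m ν hm).base := by
          refine lintegral_congr_ae ?_
          filter_upwards [gsm_dens_ae ν m hm D hDm hdisj hDc hDn k] with x hx
          rw [hx]
        rw [hcongr, lintegral_const, Measure.restrict_apply_univ,
          ← Set.univ_inter (D k), gsm_base_inter ν m hm D hDm hDc hDn k MeasurableSet.univ,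
          measure_univ, mul_one]
        set c := ∑ i, |m k i| with hc
        have hc0 : 0 ≤ c := Finset.sum_nonneg fun j _ => abs_nonneg _
        rcases eq_or_lt_of_le hc0 with h0 | h0
        · have hmk : ‖m k‖ = 0 := le_antisymm (h0 ▸ norm_le_l1 (m k)) (norm_nonneg _)
          simp [← h0, hmk, norm_eq_zero.1 hmk]
        · rw [← enorm_eq_nnnorm, ← ofReal_norm, norm_smul, Real.norm_eq_abs,
            abs_of_nonneg (inv_nonneg.2 hc0),
            ← ENNReal.ofReal_mul (mul_nonneg (inv_nonneg.2 hc0) (norm_nonneg _)),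
            mul_assoc]
          · congr 1
            field_simp
    _ = ENNReal.ofReal (∑' k, ‖m k‖) :=
        (ENNReal.ofReal_tsum_of_nonneg (fun k => norm_nonneg _) hm).symm

lemma gsm_tv (m : ℕ → EucN N) (hm : Summable fun k => ‖m k‖)
    (D : ℕ → Set α) (hDm : ∀ k, MeasurableSet (D k))
    (hdisj : Pairwise (Function.onFun Disjoint D))
    (hDc : ∀ k, ν k (D k)ᶜ = 0)
    (hDn : ∀ k j, j ≠ k → ν j (D k) = 0) :
    (gsm m ν hm).tv = ∑' k, ‖m k‖ := by
  rw [VM.tv, VM.var, withDensity_apply _ MeasurableSet.univ, Measure.restrict_univ,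
    gsm_lintegral_dens ν m hm D hDm hdisj hDc hDn,
    ENNReal.toReal_ofReal (tsum_nonneg fun k => norm_nonneg _)]

end Dev3
section Dev4
variable {α : Type} [MeasurableSpace α] {N : ℕ}
variable (ν : ℕ → Measure α) [hν : ∀ k, IsProbabilityMeasure (ν k)]

lemma summable_coord_trunc (m : ℕ → EucN N) (hm : Summable fun k => ‖m k‖)
    (i : Fin N) (g : ℕ → ℝ) (hg0 : ∀ k, 0 ≤ g k) (hg1 : ∀ k, g k ≤ 1) :
    Summable fun k => max (m k i) 0 * g k := by
  refine Summable.of_nonneg_of_le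
    (fun k => mul_nonneg (le_max_right _ _) (hg0 k)) (fun k => ?_) hm
  calc max (m k i) 0 * g k ≤ max (m k i) 0 * 1 := by
        refine mul_le_mul_of_nonneg_left (hg1 k) (le_max_right _ _)
    _ = max (m k i) 0 := mul_one _
    _ ≤ ‖m k‖ := max_le ((le_abs_self _).trans (coord_le_norm (m k) i)) (norm_nonneg _)

lemma gsm_apply (m : ℕ → EucN N) (hm : Summable fun k => ‖m k‖)
    {E : Set α} (hE : MeasurableSet E) (i : Fin N) :
    gsm m ν hm i E = ∑' k, m k i * (ν k E).toReal := by
  have hne : ∀ (c : ℕ → ℝ), ∀ k : ℕ, (ENNReal.ofReal (c k) • ν k) E ≠ ⊤ := fun c k => by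
    rw [Measure.smul_apply, smul_eq_mul]
    exact ENNReal.mul_ne_top ENNReal.ofReal_ne_top (measure_ne_top _ _)
  have happ : ∀ (c : ℕ → ℝ) (hc : ∀ k, 0 ≤ c k)
      (hfin : IsFiniteMeasure (Measure.sum fun k => ENNReal.ofReal (c k) • ν k)),
      (@Measure.toSignedMeasure _ _ (Measure.sum fun k => ENNReal.ofReal (c k) • ν k) hfin) E
        = ∑' k, c k * (ν k E).toReal := by
    intro c hc hfin
    rw [Measure.toSignedMeasure_apply_measurable hE, measureReal_def, Measure.sum_apply _ hE,
      ENNReal.tsum_toReal_eq (hne c)]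
    refine tsum_congr fun k => ?_
    rw [Measure.smul_apply, smul_eq_mul, ENNReal.toReal_mul, ENNReal.toReal_ofReal (hc k)]
  have h1 : Summable fun k => max (m k i) 0 * (ν k E).toReal :=
    summable_coord_trunc m hm i _ (fun k => ENNReal.toReal_nonneg)
      (fun k => by
        have := measure_mono (Set.subset_univ E) (μ := ν k)
        calc (ν k E).toReal ≤ (ν k Set.univ).toReal :=
              ENNReal.toReal_mono (measure_ne_top _ _) this
          _ = 1 := by rw [measure_univ]; rfl)
  have h2 : Summable fun k => max (-(m k i)) 0 * (ν k E).toReal :=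
    summable_coord_trunc (fun k => -(m k)) (by simpa using hm) i _
      (fun k => ENNReal.toReal_nonneg)
      (fun k => by
        have := measure_mono (Set.subset_univ E) (μ := ν k)
        calc (ν k E).toReal ≤ (ν k Set.univ).toReal :=
              ENNReal.toReal_mono (measure_ne_top _ _) this
          _ = 1 := by rw [measure_univ]; rfl)
  have h2' : Summable fun k => max (-(m k i)) 0 * (ν k E).toReal := h2
  rw [show gsm m ν hm i = _ - _ from rfl, VectorMeasure.sub_apply,
    happ _ (fun k => le_max_right _ _) _, happ _ (fun k => le_max_right _ _) _,
    ← Summable.tsum_sub h1 h2']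
  refine tsum_congr fun k => ?_
  rw [← sub_mul, max_zero_sub_max_neg_zero_eq_self]

lemma gsm_update (m : ℕ → EucN N) (hm : Summable fun k => ‖m k‖) (k : ℕ)
    (t : ℝ) (ht0 : 0 ≤ t) (ht1 : t ≤ 1)
    (hmT : Summable fun j => ‖(fun j => if j = k then t • m k else m j) j‖)
    (hmS : Summable fun j => ‖(fun j => if j = k then m k else (0 : EucN N)) j‖) :
    gsm (fun j => if j = k then t • m k else m j) ν hmT
      = gsm m ν hm - (1 - t) • gsm (fun j => if j = k then m k else 0) ν hmS := by
  classical
  funext i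
  ext E hE
  rw [Pi.sub_apply, VectorMeasure.sub_apply, Pi.smul_apply, VectorMeasure.smul_apply, smul_eq_mul,
    gsm_apply ν _ hmT hE i, gsm_apply ν m hm hE i, gsm_apply ν _ hmS hE i]
  have hS : ∑' j, (if j = k then m k else (0 : EucN N)) i * (ν j E).toReal
      = m k i * (ν k E).toReal := by
    rw [tsum_eq_single k]
    · simp
    · intro j hj
      simp [hj]
  rw [hS]
  have hb : ∀ j, (ν j E).toReal ≤ 1 := fun j => by
    calc (ν j E).toReal ≤ (ν j Set.univ).toReal :=
          ENNReal.toReal_mono (measure_ne_top _ _) (measure_mono (Set.subset_univ E))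
      _ = 1 := by rw [measure_univ]; rfl
  have hsum1 : Summable fun j => m j i * (ν j E).toReal := by
    refine Summable.of_norm ?_
    refine Summable.of_nonneg_of_le (fun j => norm_nonneg _) (fun j => ?_) hm
    rw [norm_mul, Real.norm_eq_abs, Real.norm_eq_abs,
      abs_of_nonneg (ENNReal.toReal_nonneg : (0:ℝ) ≤ (ν j E).toReal)]
    calc |m j i| * (ν j E).toReal ≤ |m j i| * 1 :=
          mul_le_mul_of_nonneg_left (hb j) (abs_nonneg _)
      _ = |m j i| := mul_one _
      _ ≤ ‖m j‖ := coord_le_norm (m j) i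
  have hsum2 : Summable fun j =>
      (1 - t) * (if j = k then m k i * (ν k E).toReal else 0) := by
    refine Summable.mul_left _ ?_
    refine summable_of_ne_finset_zero (s := {k}) fun j hj => ?_
    simp only [Finset.mem_singleton] at hj
    simp [hj]
  have hcongr : (fun j => (if j = k then t • m k else m j) i * (ν j E).toReal)
      = fun j => m j i * (ν j E).toReal
          - (1 - t) * (if j = k then m k i * (ν k E).toReal else 0) := by
    funext j
    by_cases hj : j = k
    · subst hj
      rw [if_pos rfl, if_pos rfl]
      have : (t • m j) i = t * m j i := rfl
      rw [this]
      ring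
    · simp [hj]
  rw [hcongr, Summable.tsum_sub hsum1 hsum2, tsum_mul_left, tsum_ite_eq]

end Dev4
section Dev5
variable {α : Type} [MeasurableSpace α] {N : ℕ}
variable (ν : ℕ → Measure α) [hν : ∀ k, IsProbabilityMeasure (ν k)]

lemma gsm_dens_measurable (m : ℕ → EucN N) (hm : Summable fun k => ‖m k‖) :
    Measurable ((gsm m ν hm).dens) :=
  (WithLp.measurable_toLp 2 _).comp (measurable_pi_lambda _ fun i => SignedMeasure.measurable_rnDeriv _ _)

set_option maxHeartbeats 1000000 in
lemma gsm_pair (m : ℕ → EucN N) (hm : Summable fun k => ‖m k‖)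
    (D : ℕ → Set α) (hDm : ∀ k, MeasurableSet (D k))
    (hdisj : Pairwise (Function.onFun Disjoint D))
    (hDc : ∀ k, ν k (D k)ᶜ = 0)
    (hDn : ∀ k j, j ≠ k → ν j (D k) = 0)
    (φ : α → EucN N) (hφ : Measurable φ) (C : ℝ) (hC : ∀ x, ‖φ x‖ ≤ C) :
    (gsm m ν hm).pair φ = ∑' k, ∫ x, ⟪φ x, m k⟫ ∂(ν k) := by
  haveI := gsm_base_finite ν m hm D hDm hDc hDn
  have hdm : Measurable ((gsm m ν hm).dens) := gsm_dens_measurable ν m hm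
  have hnint : Integrable (fun x => ‖(gsm m ν hm).dens x‖) ((gsm m ν hm).base) := by
    refine ⟨(hdm.norm).aestronglyMeasurable, ?_⟩
    rw [hasFiniteIntegral_def]
    calc ∫⁻ x, ‖‖(gsm m ν hm).dens x‖‖₊ ∂((gsm m ν hm).base)
        = ∫⁻ x, ‖(gsm m ν hm).dens x‖₊ ∂((gsm m ν hm).base) := by
          simp only [nnnorm_norm]
      _ = ENNReal.ofReal (∑' k, ‖m k‖) := gsm_lintegral_dens ν m hm D hDm hdisj hDc hDn
      _ < ⊤ := ENNReal.ofReal_lt_top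
  have hint : Integrable (fun x => ⟪φ x, (gsm m ν hm).dens x⟫) ((gsm m ν hm).base) := by
    refine Integrable.mono' (hnint.const_mul C) (hφ.inner hdm).aestronglyMeasurable ?_
    refine Filter.Eventually.of_forall fun x => ?_
    rw [Real.norm_eq_abs]
    calc |⟪φ x, (gsm m ν hm).dens x⟫| ≤ ‖φ x‖ * ‖(gsm m ν hm).dens x‖ :=
          abs_real_inner_le_norm _ _
      _ ≤ C * ‖(gsm m ν hm).dens x‖ :=
          mul_le_mul_of_nonneg_right (hC x) (norm_nonneg _)
  have huni : (gsm m ν hm).base ((⋃ j, D j)ᶜ) = 0 := by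
    rw [gsm_base ν m hm D hDm hDc hDn, Measure.sum_apply _ (MeasurableSet.iUnion hDm).compl]
    refine ENNReal.tsum_eq_zero.2 fun j => ?_
    rw [Measure.smul_apply, smul_eq_mul,
      measure_mono_null (Set.compl_subset_compl.2 (Set.subset_iUnion D j)) (hDc j), mul_zero]
  have hres : (gsm m ν hm).base.restrict (⋃ j, D j) = (gsm m ν hm).base :=
    Measure.restrict_eq_self_of_ae_mem (mem_ae_iff.2 huni)
  rw [VM.pair, ← hres, integral_iUnion hDm hdisj hint.integrableOn]
  have hresk : ∀ k, (gsm m ν hm).base.restrict (D k)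
      = (ENNReal.ofReal (∑ i, |m k i|)) • (ν k).restrict (D k) := by
    intro k
    ext E hE
    rw [Measure.restrict_apply hE, gsm_base_inter ν m hm D hDm hDc hDn k hE,
      Measure.smul_apply, Measure.restrict_apply hE, smul_eq_mul,
      measure_inter_carrier (hDm k) (hDc k)]
  have hνres : ∀ k, (ν k).restrict (D k) = ν k := fun k =>
    Measure.restrict_eq_self_of_ae_mem (mem_ae_iff.2 (hDc k))
  refine tsum_congr fun k => ?_
  have step1 : ∫ x in D k, ⟪φ x, (gsm m ν hm).dens x⟫ ∂((gsm m ν hm).base)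
      = ∫ x in D k, ⟪φ x, (∑ i, |m k i|)⁻¹ • m k⟫ ∂((gsm m ν hm).base) := by
    refine integral_congr_ae ?_
    filter_upwards [gsm_dens_ae ν m hm D hDm hdisj hDc hDn k] with x hx
    rw [hx]
  rw [step1]
  have step2 : ∫ x in D k, ⟪φ x, (∑ i, |m k i|)⁻¹ • m k⟫ ∂((gsm m ν hm).base)
      = (∑ i, |m k i|) * ((∑ i, |m k i|)⁻¹ * ∫ x, ⟪φ x, m k⟫ ∂(ν k)) := by
    rw [show ∫ x in D k, ⟪φ x, (∑ i, |m k i|)⁻¹ • m k⟫ ∂((gsm m ν hm).base)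
        = ∫ x, ⟪φ x, (∑ i, |m k i|)⁻¹ • m k⟫ ∂((gsm m ν hm).base.restrict (D k)) from rfl,
      hresk k, integral_smul_measure,
      ENNReal.toReal_ofReal (Finset.sum_nonneg fun j _ => abs_nonneg _), hνres k]
    rw [smul_eq_mul]
    congr 1
    rw [← integral_const_mul]
    refine integral_congr_ae (Filter.Eventually.of_forall fun x => ?_)
    exact real_inner_smul_right _ _ _
  rw [step2]
  set c := ∑ i, |m k i| with hc
  have hc0 : 0 ≤ c := Finset.sum_nonneg fun j _ => abs_nonneg _
  rcases eq_or_lt_of_le hc0 with h0 | h0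
  · have hmk : m k = 0 := by
      have : ‖m k‖ = 0 := le_antisymm (h0 ▸ norm_le_l1 (m k)) (norm_nonneg _)
      exact norm_eq_zero.1 this
    simp [← h0, hmk]
  · rw [← mul_assoc, mul_inv_cancel₀ (ne_of_gt h0), one_mul]

end Dev5
set_option maxHeartbeats 2000000 in
/-- If `‖g_λ^V − g_λ‖_∞ < ε` and `g_λ < λ/2 − ε` `ν_k`-a.e., then the `k`-th GSM
coefficient of the minimizer over the GSM space `V` vanishes. -/
theorem stmt17 {M N : ℕ} (S : Set (EucN M)) (hS : IsCompact S)
    {H : Type} [NormedAddCommGroup H] [InnerProductSpace ℝ H] [CompleteSpace H]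
    (A : VM S N →ₗ[ℝ] H) (Astar : H → C(S, EucN N))
    (hadj : ∀ (μ : VM S N) (g : H), ⟪A μ, g⟫ = μ.pair (Astar g))
    (ν : ℕ → Measure S) [∀ k, IsProbabilityMeasure (ν k)]
    (hsing : Pairwise fun k j => Measure.MutuallySingular (ν k) (ν j))
    (l : ℝ) (hl : 0 < l) (f : H)
    (m : ℕ → EucN N) (hm : Summable fun k => ‖m k‖)
    (hminV : ∀ (m' : ℕ → EucN N) (hm' : Summable fun k => ‖m' k‖),
      Gcrit A f l (gsm m ν hm) ≤ Gcrit A f l (gsm m' ν hm'))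
    (μl : VM S N) (hmin : ∀ ν' : VM S N, Gcrit A f l μl ≤ Gcrit A f l ν')
    (ε : ℝ) (hε : 0 < ε)
    (hsup : ∀ x : S, |‖Astar (f - A (gsm m ν hm)) x‖ - ‖Astar (f - A μl) x‖| < ε)
    (k : ℕ) (hae : ∀ᵐ x ∂(ν k), ‖Astar (f - A μl) x‖ < l / 2 - ε) :
    m k = 0 := by
  classical
  by_contra hmk
  have hmknorm : 0 < ‖m k‖ := norm_pos_iff.2 hmk
  obtain ⟨D, hDm, hdisj, hDc, hDn⟩ := exists_carriers ν hsing
  haveI : CompactSpace S := isCompact_iff_compactSpace.mp hS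
  set u : H := f - A (gsm m ν hm) with hu
  set φ : S → EucN N := fun x => Astar u x with hφ
  have hφcont : Continuous φ := (Astar u).continuous
  have hφmeas : Measurable φ := hφcont.measurable
  set C : ℝ := ‖Astar u‖ with hCdef
  have hC : ∀ x : S, ‖φ x‖ ≤ C := fun x => (Astar u).norm_coe_le_norm x
  -- the single-spike coefficient sequence
  set mS : ℕ → EucN N := fun j => if j = k then m k else 0 with hmS
  have hmSsum : Summable fun j => ‖mS j‖ := by
    refine summable_of_ne_finset_zero (s := {k}) fun j hj => ?_
    have : j ≠ k := by simpa using hj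
    simp [hmS, this]
  -- a.e. bound on ‖φ‖
  have haebound : ∀ᵐ x ∂(ν k), ‖φ x‖ < l / 2 := by
    filter_upwards [hae] with x hx
    have h2 := hsup x
    have h3 : ‖Astar u x‖ - ‖Astar (f - A μl) x‖ < ε := (abs_sub_lt_iff.1 h2).1
    calc ‖φ x‖ < ‖Astar (f - A μl) x‖ + ε := by simpa [hφ] using lt_add_of_sub_left_lt h3
      _ < (l / 2 - ε) + ε := by linarith
      _ = l / 2 := by ring
  -- integrability facts
  have hφnormint : Integrable (fun x => ‖φ x‖) (ν k) := by
    refine Integrable.mono' (integrable_const C) ((hφmeas.norm).aestronglyMeasurable) ?_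
    exact Filter.Eventually.of_forall fun x => by
      rw [Real.norm_eq_abs, abs_of_nonneg (norm_nonneg _)]; exact hC x
  have hinnerint : Integrable (fun x => ⟪φ x, m k⟫) (ν k) := by
    refine Integrable.mono' (integrable_const (C * ‖m k‖))
      ((hφmeas.inner measurable_const).aestronglyMeasurable) ?_
    refine Filter.Eventually.of_forall fun x => ?_
    rw [Real.norm_eq_abs]
    calc |⟪φ x, m k⟫| ≤ ‖φ x‖ * ‖m k‖ := abs_real_inner_le_norm _ _
      _ ≤ C * ‖m k‖ := mul_le_mul_of_nonneg_right (hC x) (norm_nonneg _)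
  -- J := ∫ ‖φ‖ dν k < l/2
  set J : ℝ := ∫ x, ‖φ x‖ ∂(ν k) with hJdef
  have hJ : J < l / 2 := by
    set g : S → ℝ := fun x => l / 2 - ‖φ x‖ with hg
    have hgint : Integrable g (ν k) := (integrable_const (l / 2)).sub hφnormint
    have hgnn : 0 ≤ᵐ[ν k] g := by
      filter_upwards [haebound] with x hx
      simp only [hg, Pi.zero_apply]
      linarith
    have hmemsup : ∀ᵐ x ∂(ν k), x ∈ Function.support g := by
      filter_upwards [haebound] with x hx
      exact Function.mem_support.2 (by simp only [hg]; intro h0; linarith)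
    have hsupc : ν k (Function.support g)ᶜ = 0 := MeasureTheory.ae_iff.1 hmemsup
    have hsupp : 0 < ν k (Function.support g) := by
      have h1 := measure_union_le (μ := ν k) (Function.support g) (Function.support g)ᶜ
      rw [Set.union_compl_self, measure_univ, hsupc, add_zero] at h1
      exact lt_of_lt_of_le zero_lt_one h1
    have hpos : 0 < ∫ x, g x ∂(ν k) :=
      (integral_pos_iff_support_of_nonneg_ae hgnn hgint).2 hsupp
    have hInt : ∫ x, g x ∂(ν k) = l / 2 - J := by
      rw [hg]
      rw [integral_sub (integrable_const _) hφnormint, integral_const]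
      simp [measure_univ]
      exact hJdef.symm
    rw [hInt] at hpos
    linarith
  -- I := pairing value
  set I : ℝ := ∫ x, ⟪φ x, m k⟫ ∂(ν k) with hIdef
  have hIle : I ≤ ‖m k‖ * J := by
    have h1 : I ≤ ∫ x, ‖φ x‖ * ‖m k‖ ∂(ν k) := by
      refine integral_mono hinnerint (hφnormint.mul_const _) fun x => ?_
      exact (real_inner_le_norm _ _)
    calc I ≤ ∫ x, ‖φ x‖ * ‖m k‖ ∂(ν k) := h1
      _ = ‖m k‖ * J := by
        rw [hJdef, ← integral_const_mul]
        exact integral_congr_ae (Filter.Eventually.of_forall fun x => by ring)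
  have h2I : 2 * I < l * ‖m k‖ := by
    have : ‖m k‖ * J < ‖m k‖ * (l / 2) := mul_lt_mul_of_pos_left hJ hmknorm
    nlinarith
  -- pairing identity
  have hpair : ⟪A (gsm mS ν hmSsum), u⟫ = I := by
    rw [hadj]
    rw [gsm_pair ν mS hmSsum D hDm hdisj hDc hDn φ hφmeas C hC]
    rw [tsum_eq_single k]
    · simp [hmS, hIdef]
    · intro j hj
      simp [hmS, hj]
  -- the competitor coefficients
  set AD : ℝ := ‖A (gsm mS ν hmSsum)‖ ^ 2 with hAD
  set gap : ℝ := l * ‖m k‖ - 2 * I with hgap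
  have hgappos : 0 < gap := by rw [hgap]; linarith
  set σ : ℝ := min 1 (gap / (AD + 1)) with hσdef
  have hADnn : 0 ≤ AD := sq_nonneg _
  have hσpos : 0 < σ := lt_min one_pos (div_pos hgappos (by linarith))
  have hσle1 : σ ≤ 1 := min_le_left _ _
  have hσAD : σ * AD < gap := by
    rcases eq_or_lt_of_le hADnn with h0 | h0
    · rw [← h0, mul_zero]; exact hgappos
    · calc σ * AD ≤ gap / (AD + 1) * AD := by
            refine mul_le_mul_of_nonneg_right (min_le_right _ _) hADnn
        _ < gap := by
            rw [div_mul_eq_mul_div, div_lt_iff₀ (by linarith)]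
            nlinarith
  set mT : ℕ → EucN N := fun j => if j = k then (1 - σ) • m k else m j with hmT
  have hmTsum : Summable fun j => ‖mT j‖ := by
    refine Summable.of_nonneg_of_le (fun j => norm_nonneg _) (fun j => ?_) hm
    simp only [hmT]
    by_cases hj : j = k
    · rw [if_pos hj, hj, norm_smul, Real.norm_eq_abs,
        abs_of_nonneg (by linarith : (0:ℝ) ≤ 1 - σ)]
      nlinarith [norm_nonneg (m k)]
    · rw [if_neg hj]
  -- TV computations
  have hT : (gsm m ν hm).tv = ∑' j, ‖m j‖ := gsm_tv ν m hm D hDm hdisj hDc hDn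
  have hTσ : (gsm mT ν hmTsum).tv = (∑' j, ‖m j‖) - σ * ‖m k‖ := by
    rw [gsm_tv ν mT hmTsum D hDm hdisj hDc hDn]
    have heq : (fun j => ‖mT j‖)
        = fun j => ‖m j‖ - σ * (if j = k then ‖m k‖ else 0) := by
      funext j
      simp only [hmT]
      by_cases hj : j = k
      · rw [if_pos hj, if_pos hj, hj, norm_smul, Real.norm_eq_abs,
          abs_of_nonneg (by linarith : (0:ℝ) ≤ 1 - σ)]
        ring
      · rw [if_neg hj, if_neg hj]
        ring
    rw [heq]
    have hs2 : Summable fun j => σ * (if j = k then ‖m k‖ else 0) := by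
      refine Summable.mul_left _ ?_
      refine summable_of_ne_finset_zero (s := {k}) fun j hj => ?_
      have : j ≠ k := by simpa using hj
      simp [this]
    rw [Summable.tsum_sub hm hs2, tsum_mul_left, tsum_ite_eq]
  -- the measure identity
  have hupdate : gsm mT ν hmTsum = gsm m ν hm - σ • gsm mS ν hmSsum := by
    have h := gsm_update ν m hm k (1 - σ) (by linarith) (by linarith) hmTsum hmSsum
    have hσσ : 1 - (1 - σ) = σ := by ring
    rw [hσσ] at h
    exact h
  have hAupd : f - A (gsm mT ν hmTsum) = u + σ • A (gsm mS ν hmSsum) := by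
    rw [hupdate, map_sub, _root_.map_smul, hu]
    abel
  -- expand the criterion inequality
  have hckey := hminV mT hmTsum
  rw [Gcrit, Gcrit, hAupd, hT, hTσ, ← hu] at hckey
  have hexp : ‖u + σ • A (gsm mS ν hmSsum)‖ ^ 2
      = ‖u‖ ^ 2 + 2 * (σ * I) + σ ^ 2 * AD := by
    rw [norm_add_sq_real, real_inner_smul_right, norm_smul, Real.norm_eq_abs,
      abs_of_nonneg hσpos.le, mul_pow, hAD, real_inner_comm, hpair]
  rw [hexp] at hckey
  have hfin : l * (σ * ‖m k‖) ≤ 2 * (σ * I) + σ ^ 2 * AD := by nlinarith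
  have : σ * (l * ‖m k‖) < σ * (l * ‖m k‖) := by nlinarith [mul_lt_mul_of_pos_left hσAD hσpos]
  exact lt_irrefl _ this
end

section
/- Let {V_n} be a nested sequence of weak-star closed subspaces of M(S)^N (S compact and uncountable) whose union is R-dense in M(S)^N. Then κ(V_n) → 0 as n → ∞, where κ(V) = sup over μ with ‖μ‖_TV = 1 of inf over ν ∈ V of max{‖A(μ − ν)‖_H, |‖μ‖_TV − ‖ν‖_TV|}, for A: M(S)^N → H a weak-star continuous (hence compact) linear operator into a Hilbert space. -/
open MeasureTheory Filter Topology Metric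
open scoped RealInnerProductSpace ENNReal

/-- The weak-star topology on `M(S)^N`, induced by the pairings against
continuous test functions (i.e. by the duality with `C(S)^N`). -/
noncomputable def wsTopology (M : ℕ) (S : Set (EucN M)) (N : ℕ) :
    TopologicalSpace (VM S N) :=
  TopologicalSpace.induced (fun (μ : VM S N) => fun φ : C(S, EucN N) => μ.pair φ)
    inferInstance


section Aux

variable {α : Type} [MeasurableSpace α] {N : ℕ}

instance (s : SignedMeasure α) : IsFiniteMeasure s.totalVariation := by
  unfold MeasureTheory.SignedMeasure.totalVariation; infer_instance

instance (μ : VM α N) : IsFiniteMeasure μ.base := by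
  constructor
  rw [VM.base, Measure.finset_sum_apply]
  exact ENNReal.sum_lt_top.mpr fun i _ => measure_lt_top _ _

theorem tv_le_base (μ : VM α N) (i : Fin N) : (μ i).totalVariation ≤ μ.base := by
  intro s
  rw [VM.base, Measure.finset_sum_apply]
  exact Finset.single_le_sum (f := fun j => (μ j).totalVariation s)
    (fun j _ => zero_le) (Finset.mem_univ i)

theorem posPart_ac (μ : VM α N) (i : Fin N) :
    (μ i).toJordanDecomposition.posPart ≪ μ.base := by
  have h1 : (μ i).toJordanDecomposition.posPart ≤ (μ i).totalVariation :=
    Measure.le_add_right le_rfl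
  exact Measure.absolutelyContinuous_of_le (h1.trans (tv_le_base μ i))

theorem negPart_ac (μ : VM α N) (i : Fin N) :
    (μ i).toJordanDecomposition.negPart ≪ μ.base := by
  have h1 : (μ i).toJordanDecomposition.negPart ≤ (μ i).totalVariation :=
    Measure.le_add_left le_rfl
  exact Measure.absolutelyContinuous_of_le (h1.trans (tv_le_base μ i))

theorem integrable_of_bdd {τ : Measure α} [IsFiniteMeasure τ] {f : α → ℝ} {C : ℝ}
    (hfm : Measurable f) (hC : ∀ x, |f x| ≤ C) : Integrable f τ :=
  Integrable.mono' (integrable_const C) hfm.aestronglyMeasurable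
    (Filter.Eventually.of_forall fun x => by simpa [Real.norm_eq_abs] using hC x)

/-- Integral of a bounded function against the "signed measure" `s`, via Jordan parts. -/
noncomputable def jint (s : SignedMeasure α) (f : α → ℝ) : ℝ :=
  (∫ x, f x ∂s.toJordanDecomposition.posPart) - ∫ x, f x ∂s.toJordanDecomposition.negPart

theorem jint_add (s t : SignedMeasure α) {f : α → ℝ} {C : ℝ}
    (hfm : Measurable f) (hC : ∀ x, |f x| ≤ C) :
    jint (s + t) f = jint s f + jint t f := by
  set P := (s + t).toJordanDecomposition.posPart
  set Np := (s + t).toJordanDecomposition.negPart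
  set P1 := s.toJordanDecomposition.posPart
  set N1 := s.toJordanDecomposition.negPart
  set P2 := t.toJordanDecomposition.posPart
  set N2 := t.toJordanDecomposition.negPart
  have e1 : P.toSignedMeasure - Np.toSignedMeasure =
      (P1.toSignedMeasure - N1.toSignedMeasure) + (P2.toSignedMeasure - N2.toSignedMeasure) := by
    have h1 : P.toSignedMeasure - Np.toSignedMeasure = s + t :=
      (s + t).toSignedMeasure_toJordanDecomposition
    have h2 : P1.toSignedMeasure - N1.toSignedMeasure = s :=
      s.toSignedMeasure_toJordanDecomposition
    have h3 : P2.toSignedMeasure - N2.toSignedMeasure = t :=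
      t.toSignedMeasure_toJordanDecomposition
    rw [h1, h2, h3]
  have key : P + (N1 + N2) = Np + (P1 + P2) := by
    rw [← Measure.toSignedMeasure_eq_toSignedMeasure_iff, Measure.toSignedMeasure_add,
      Measure.toSignedMeasure_add, Measure.toSignedMeasure_add, Measure.toSignedMeasure_add]
    have ha : P.toSignedMeasure =
        (P1.toSignedMeasure - N1.toSignedMeasure) + (P2.toSignedMeasure - N2.toSignedMeasure)
          + Np.toSignedMeasure := eq_add_of_sub_eq e1
    rw [ha]; abel
  have hint : ∀ (m : Measure α) [IsFiniteMeasure m], Integrable f m := fun m _ =>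
    integrable_of_bdd hfm hC
  have hI := congrArg (fun m : Measure α => ∫ x, f x ∂m) key
  simp only [integral_add_measure (hint _) ((hint _).add_measure (hint _)),
    integral_add_measure (hint _) (hint _)] at hI
  simp only [jint]
  linarith

theorem jint_neg (s : SignedMeasure α) (f : α → ℝ) : jint (-s) f = - jint s f := by
  simp only [jint, MeasureTheory.SignedMeasure.toJordanDecomposition_neg,
    MeasureTheory.JordanDecomposition.neg_posPart, MeasureTheory.JordanDecomposition.neg_negPart]
  ring

theorem jint_sub (s t : SignedMeasure α) {f : α → ℝ} {C : ℝ}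
    (hfm : Measurable f) (hC : ∀ x, |f x| ≤ C) :
    jint (s - t) f = jint s f - jint t f := by
  rw [sub_eq_add_neg, jint_add s (-t) hfm hC, jint_neg]
  ring

theorem jint_smul (s : SignedMeasure α) (f : α → ℝ) {c : ℝ} (hc : 0 ≤ c) :
    jint (c • s) f = c * jint s f := by
  simp only [jint, MeasureTheory.SignedMeasure.toJordanDecomposition_smul_real,
    MeasureTheory.JordanDecomposition.real_smul_posPart_nonneg _ _ hc,
    MeasureTheory.JordanDecomposition.real_smul_negPart_nonneg _ _ hc,
    integral_smul_nnreal_measure]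
  simp only [NNReal.smul_def, Real.coe_toNNReal _ hc, smul_eq_mul]
  ring

end Aux

section Pair

variable {α : Type} [MeasurableSpace α] {N : ℕ}

theorem dens_apply (μ : VM α N) (x : α) (i : Fin N) :
    μ.dens x i = (μ i).rnDeriv μ.base x := rfl

theorem integrable_mul_rnDeriv (μ : VM α N) (i : Fin N) {f : α → ℝ} {C : ℝ}
    (hfm : Measurable f) (hC : ∀ x, |f x| ≤ C) :
    Integrable (fun x => f x * (μ i).rnDeriv μ.base x) μ.base :=
  Integrable.bdd_mul ((μ i).integrable_rnDeriv μ.base) hfm.aestronglyMeasurable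
    (Filter.Eventually.of_forall fun x => by simpa [Real.norm_eq_abs] using hC x)

theorem integral_mul_rnDeriv (μ : VM α N) (i : Fin N) {f : α → ℝ} {C : ℝ}
    (hfm : Measurable f) (hC : ∀ x, |f x| ≤ C) :
    ∫ x, f x * (μ i).rnDeriv μ.base x ∂μ.base = jint (μ i) f := by
  have hsplit : (fun x => f x * (μ i).rnDeriv μ.base x) =
      fun x => (((μ i).toJordanDecomposition.posPart.rnDeriv μ.base x).toReal • f x)
        - (((μ i).toJordanDecomposition.negPart.rnDeriv μ.base x).toReal • f x) := by
    funext x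
    simp only [MeasureTheory.SignedMeasure.rnDeriv, smul_eq_mul]
    ring
  have hintP : Integrable
      (fun x => ((μ i).toJordanDecomposition.posPart.rnDeriv μ.base x).toReal • f x) μ.base := by
    simpa [smul_eq_mul, mul_comm] using
      (Integrable.bdd_mul (Measure.integrable_toReal_rnDeriv) hfm.aestronglyMeasurable
        (Filter.Eventually.of_forall fun x => by simpa [Real.norm_eq_abs] using hC x))
  have hintN : Integrable
      (fun x => ((μ i).toJordanDecomposition.negPart.rnDeriv μ.base x).toReal • f x) μ.base := by
    simpa [smul_eq_mul, mul_comm] using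
      (Integrable.bdd_mul (Measure.integrable_toReal_rnDeriv) hfm.aestronglyMeasurable
        (Filter.Eventually.of_forall fun x => by simpa [Real.norm_eq_abs] using hC x))
  rw [hsplit, integral_sub hintP hintN,
    MeasureTheory.integral_rnDeriv_smul (posPart_ac μ i) (f := f),
    MeasureTheory.integral_rnDeriv_smul (negPart_ac μ i) (f := f)]
  rfl

theorem pair_eq_jint (μ : VM α N) {f : α → EucN N} {C : ℝ}
    (hfm : ∀ i, Measurable fun x => f x i) (hC : ∀ x i, |f x i| ≤ C) :
    μ.pair f = ∑ i, jint (μ i) (fun x => f x i) := by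
  unfold VM.pair
  have h1 : ∀ x, ⟪f x, μ.dens x⟫ = ∑ i, f x i * μ.dens x i := by
    intro x
    rw [PiLp.inner_apply]
    simp [RCLike.inner_apply, starRingEnd_apply]
    exact Finset.sum_congr rfl fun _ _ => mul_comm _ _
  calc ∫ x, ⟪f x, μ.dens x⟫ ∂μ.base
      = ∫ x, ∑ i, f x i * (μ i).rnDeriv μ.base x ∂μ.base := by
        simp only [h1, dens_apply]
    _ = ∑ i, ∫ x, f x i * (μ i).rnDeriv μ.base x ∂μ.base :=
        integral_finset_sum _ fun i _ =>
          integrable_mul_rnDeriv μ i (hfm i) (fun x => hC x i)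
    _ = ∑ i, jint (μ i) (fun x => f x i) := by
        refine Finset.sum_congr rfl fun i _ => ?_
        exact integral_mul_rnDeriv μ i (hfm i) (fun x => hC x i)

theorem pair_sub (μ ν : VM α N) {f : α → EucN N} {C : ℝ}
    (hfm : ∀ i, Measurable fun x => f x i) (hC : ∀ x i, |f x i| ≤ C) :
    (μ - ν).pair f = μ.pair f - ν.pair f := by
  rw [pair_eq_jint μ hfm hC, pair_eq_jint ν hfm hC, pair_eq_jint (μ - ν) hfm hC,
    ← Finset.sum_sub_distrib]
  refine Finset.sum_congr rfl fun i _ => ?_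
  have : (μ - ν) i = μ i - ν i := rfl
  rw [this, jint_sub _ _ (hfm i) (fun x => hC x i)]

theorem pair_smul (μ : VM α N) {c : ℝ} (hc : 0 ≤ c) {f : α → EucN N} {C : ℝ}
    (hfm : ∀ i, Measurable fun x => f x i) (hC : ∀ x i, |f x i| ≤ C) :
    (c • μ).pair f = c * μ.pair f := by
  rw [pair_eq_jint μ hfm hC, pair_eq_jint (c • μ) hfm hC, Finset.mul_sum]
  refine Finset.sum_congr rfl fun i _ => ?_
  have : (c • μ) i = c • μ i := rfl
  rw [this, jint_smul _ _ hc]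

theorem pair_zero (f : α → EucN N) : (0 : VM α N).pair f = 0 := by
  have hb : (0 : VM α N).base = 0 := by
    rw [VM.base]
    simp [MeasureTheory.SignedMeasure.totalVariation_zero]
  unfold VM.pair
  rw [hb, integral_zero_measure]

theorem measurable_dens (μ : VM α N) : Measurable μ.dens :=
  (show Continuous (WithLp.toLp 2 : (Fin N → ℝ) → EucN N) by fun_prop).measurable.comp
    (measurable_pi_lambda _ fun i => MeasureTheory.SignedMeasure.measurable_rnDeriv (μ i) μ.base)

theorem integrable_dens (μ : VM α N) : Integrable μ.dens μ.base := by
  have : μ.dens = fun x => ∑ i, ((μ i).rnDeriv μ.base x) • (EuclideanSpace.single i (1:ℝ)) := by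
    funext x
    apply PiLp.ext
    intro j
    rw [show (∑ i, (μ i).rnDeriv μ.base x • EuclideanSpace.single i (1:ℝ)) j
        = ∑ i, ((μ i).rnDeriv μ.base x • EuclideanSpace.single i (1:ℝ)) j from
      by rw [WithLp.ofLp_sum, Finset.sum_apply]]
    simp [dens_apply, EuclideanSpace.single_apply, Finset.sum_ite_eq', smul_eq_mul]
  rw [this]
  exact integrable_finset_sum _ fun i _ => ((μ i).integrable_rnDeriv μ.base).smul_const _

theorem tv_eq_integral (μ : VM α N) : μ.tv = ∫ x, ‖μ.dens x‖ ∂μ.base := by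
  rw [VM.tv, VM.var, withDensity_apply _ MeasurableSet.univ, Measure.restrict_univ,
    integral_norm_eq_lintegral_enorm (integrable_dens μ).aestronglyMeasurable]
  simp only [enorm_eq_nnnorm]

theorem tv_nonneg (μ : VM α N) : 0 ≤ μ.tv := ENNReal.toReal_nonneg

theorem abs_pair_le (μ : VM α N) {f : α → EucN N} {C : ℝ}
    (hC0 : 0 ≤ C) (hC : ∀ x, ‖f x‖ ≤ C) :
    |μ.pair f| ≤ C * μ.tv := by
  have h1 : |μ.pair f| ≤ ∫ x, ‖⟪f x, μ.dens x⟫‖ ∂μ.base := by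
    rw [← Real.norm_eq_abs]
    exact norm_integral_le_integral_norm _
  have h2 : ∫ x, ‖⟪f x, μ.dens x⟫‖ ∂μ.base ≤ ∫ x, C * ‖μ.dens x‖ ∂μ.base := by
    refine integral_mono_of_nonneg (Filter.Eventually.of_forall fun x => norm_nonneg _)
      ((integrable_dens μ).norm.const_mul C) (Filter.Eventually.of_forall fun x => ?_)
    simp only [Real.norm_eq_abs]
    exact le_trans (abs_real_inner_le_norm _ _)
      (mul_le_mul_of_nonneg_right (hC x) (norm_nonneg _))
  have h3 : ∫ x, C * ‖μ.dens x‖ ∂μ.base = C * μ.tv := by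
    rw [MeasureTheory.integral_const_mul, ← tv_eq_integral]
  linarith

end Pair


section Coord

theorem abs_coord_le {N : ℕ} (y : EucN N) (i : Fin N) : |y i| ≤ ‖y‖ := by
  have h := abs_real_inner_le_norm (EuclideanSpace.single i (1:ℝ)) y
  rw [EuclideanSpace.norm_single] at h
  simpa [EuclideanSpace.inner_single_left] using h

end Coord

/-- If `{V_n}` is a nested sequence of weak-star closed subspaces of `M(S)^N`
(`S` compact uncountable) whose union is R-dense, then `κ(V_n) → 0`, where
`κ(V) = sup_{‖μ‖_TV = 1} inf_{ν ∈ V} max{‖A(μ − ν)‖, |‖μ‖_TV − ‖ν‖_TV|}`. -/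
theorem stmt19 {M N : ℕ} (S : Set (EucN M)) (hS : IsCompact S) (hSu : ¬ S.Countable)
    {H : Type} [NormedAddCommGroup H] [InnerProductSpace ℝ H] [CompleteSpace H]
    (A : VM S N →ₗ[ℝ] H)
    (hA : @Continuous _ _ (wsTopology M S N) _ A)
    (V : ℕ → Submodule ℝ (VM S N)) (hmono : Monotone V)
    (hVcl : ∀ n, @IsClosed _ (wsTopology M S N) (V n : Set (VM S N)))
    (hdense : ∀ μ : VM S N, ∃ νn : ℕ → VM S N, (∀ n, νn n ∈ V n) ∧
      WSTendsto νn μ ∧ Tendsto (fun n => (νn n).tv) atTop (𝓝 μ.tv)) :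
    Tendsto (fun n => sSup {r : ℝ | ∃ μ : VM S N, μ.tv = 1 ∧
        r = sInf {s : ℝ | ∃ ν ∈ V n, s = max ‖A (μ - ν)‖ |μ.tv - ν.tv|}})
      atTop (𝓝 0) := by
  classical
  haveI : CompactSpace S := isCompact_iff_compactSpace.mp hS
  -- coordinate facts for continuous test functions
  have hφm : ∀ (φ : C(S, EucN N)) (i : Fin N), Measurable fun x => (φ x) i :=
    fun φ i => (measurable_pi_apply i).comp
      ((show Continuous (WithLp.ofLp : EucN N → (Fin N → ℝ)) by fun_prop).measurable.comp
        φ.continuous.measurable)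
  have hφb : ∀ (φ : C(S, EucN N)) (x : ↥S) (i : Fin N), |(φ x) i| ≤ ‖φ‖ :=
    fun φ x i => le_trans (abs_coord_le _ i) (φ.norm_coe_le_norm x)
  -- Step A: finitely many functionals dominating A
  set P : VM S N → (C(S, EucN N) → ℝ) := fun μ φ => μ.pair φ with hPdef
  have hnhds : A ⁻¹' Metric.ball (0 : H) 1 ∈ @nhds _ (wsTopology M S N) 0 := by
    have h0 : Filter.Tendsto A (@nhds _ (wsTopology M S N) 0) (𝓝 (A 0)) :=
      @Continuous.tendsto _ _ (wsTopology M S N) _ _ hA 0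
    rw [map_zero] at h0
    exact h0 (Metric.ball_mem_nhds _ one_pos)
  have hcomap : @nhds _ (wsTopology M S N) 0 = Filter.comap P (𝓝 (P 0)) :=
    nhds_induced P 0
  rw [hcomap] at hnhds
  obtain ⟨U, hU, hUsub⟩ := Filter.mem_comap.mp hnhds
  rw [nhds_pi] at hU
  obtain ⟨I, hIfin, Vs, hVs, hIV⟩ := Filter.mem_pi.mp hU
  have hrad : ∀ φ, ∃ r : ℝ, 0 < r ∧ Metric.ball (0:ℝ) r ⊆ Vs φ := by
    intro φ
    have h1 : P 0 φ = 0 := pair_zero φ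
    have h2 : Vs φ ∈ 𝓝 (0:ℝ) := by have := hVs φ; rwa [h1] at this
    obtain ⟨r, hr, hrsub⟩ := Metric.mem_nhds_iff.mp h2
    exact ⟨r, hr, hrsub⟩
  choose d hd hdball using hrad
  set t : Finset C(S, EucN N) := hIfin.toFinset with ht
  set g : VM S N → ℝ := fun σ => ∑ φ ∈ t, (d φ)⁻¹ * |σ.pair φ| with hgdef
  have hterm_nonneg : ∀ (σ : VM S N) (φ : C(S, EucN N)),
      0 ≤ (d φ)⁻¹ * |σ.pair φ| :=
    fun σ φ => mul_nonneg (inv_nonneg.mpr (hd φ).le) (abs_nonneg _)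
  have hg_nonneg : ∀ σ, 0 ≤ g σ := fun σ =>
    Finset.sum_nonneg fun φ _ => hterm_nonneg σ φ
  have claim1 : ∀ σ : VM S N, g σ < 1 → ‖A σ‖ ≤ 1 := by
    intro σ hσ
    have hmem : P σ ∈ I.pi Vs := by
      rw [Set.mem_pi]
      intro φ hφ
      apply hdball φ
      rw [Metric.mem_ball, Real.dist_eq, sub_zero]
      have hterm : (d φ)⁻¹ * |σ.pair φ| ≤ g σ :=
        Finset.single_le_sum (f := fun ψ => (d ψ)⁻¹ * |σ.pair ψ|)
          (fun ψ _ => hterm_nonneg σ ψ) (hIfin.mem_toFinset.mpr hφ)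
      by_contra hcon
      push_neg at hcon
      have h1 : (1:ℝ) ≤ (d φ)⁻¹ * |σ.pair φ| := by
        rw [← inv_mul_cancel₀ (hd φ).ne']
        exact mul_le_mul_of_nonneg_left hcon (inv_nonneg.mpr (hd φ).le)
      linarith
    have h2 : σ ∈ A ⁻¹' Metric.ball 0 1 := hUsub (Set.mem_preimage.mpr (hIV hmem))
    have h3 : ‖A σ‖ < 1 := by
      simpa [Metric.mem_ball, dist_zero_right] using h2
    exact h3.le
  have claim2 : ∀ σ : VM S N, ‖A σ‖ ≤ g σ := by
    intro σ
    refine le_of_forall_pos_le_add fun ε hε => ?_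
    have hgε : 0 < g σ + ε := by linarith [hg_nonneg σ]
    set c : ℝ := (g σ + ε)⁻¹ with hc
    have hc0 : 0 < c := inv_pos.mpr hgε
    have hgc : g (c • σ) = c * g σ := by
      rw [hgdef, Finset.mul_sum]
      refine Finset.sum_congr rfl fun φ _ => ?_
      have hps : (c • σ).pair φ = c * σ.pair φ :=
        pair_smul σ hc0.le (hφm φ) (fun x i => hφb φ x i)
      rw [hps, abs_mul, abs_of_pos hc0]
      ring
    have hlt : g (c • σ) < 1 := by
      rw [hgc, hc, inv_mul_eq_div, div_lt_one hgε]
      linarith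
    have h1 := claim1 _ hlt
    rw [A.map_smul, norm_smul, Real.norm_eq_abs, abs_of_pos hc0] at h1
    rw [hc, inv_mul_le_iff₀ hgε, mul_one] at h1
    exact h1
  -- Step B: total boundedness of the image of the unit sphere
  set Q : VM S N → (↥t → ℝ) := fun μ ψ => μ.pair ψ.1 with hQdef
  set B : Set (↥t → ℝ) := Q '' {μ : VM S N | μ.tv = 1} with hBdef
  set R : ℝ := 1 + ∑ φ ∈ t, ‖φ‖ with hRdef
  have hR0 : 0 ≤ R := by
    have : (0:ℝ) ≤ ∑ φ ∈ t, ‖φ‖ := Finset.sum_nonneg fun φ _ => norm_nonneg _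
    rw [hRdef]; linarith
  have hBsub : B ⊆ Metric.closedBall 0 R := by
    rintro y ⟨μ, hμ, rfl⟩
    rw [Metric.mem_closedBall, dist_zero_right]
    refine (pi_norm_le_iff_of_nonneg hR0).mpr fun ψ => ?_
    rw [Real.norm_eq_abs]
    have h1 : |μ.pair ψ.1| ≤ ‖ψ.1‖ * μ.tv :=
      abs_pair_le μ (norm_nonneg ψ.1) (fun x => ψ.1.norm_coe_le_norm x)
    have h2 : μ.tv = 1 := hμ
    have h3 : ‖ψ.1‖ ≤ ∑ φ ∈ t, ‖φ‖ :=
      Finset.single_le_sum (f := fun φ => ‖φ‖) (fun φ _ => norm_nonneg _) ψ.2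
    have : |μ.pair ψ.1| ≤ ‖ψ.1‖ := by rw [h2] at h1; simpa using h1
    rw [hRdef]
    linarith
  have hTB : TotallyBounded B :=
    (isCompact_closedBall (0 : ↥t → ℝ) R).totallyBounded.subset hBsub
  -- Step C: conclusion
  set W : ℝ := ∑ φ ∈ t, (d φ)⁻¹ with hWdef
  have hW0 : 0 ≤ W := Finset.sum_nonneg fun φ _ => inv_nonneg.mpr (hd φ).le
  rw [Metric.tendsto_atTop]
  intro ε hε
  set ε' : ℝ := min ((ε/4)/(W+1)) (ε/4) with hε'def
  have hε'0 : 0 < ε' := lt_min (div_pos (by linarith) (by linarith)) (by linarith)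
  have hε'1 : ε' ≤ (ε/4)/(W+1) := min_le_left _ _
  have hε'2 : ε' ≤ ε/4 := min_le_right _ _
  obtain ⟨Y, hYsub, hYfin, hYcov⟩ :=
    (totallyBounded_iff_subset.mp hTB) _ (dist_mem_uniformity hε'0)
  have hnet : ∀ y ∈ Y, ∃ (m : ℕ) (ν : VM S N), ν ∈ V m ∧
      (∀ ψ : ↥t, |ν.pair ψ.1 - y ψ| < ε') ∧ |ν.tv - 1| < ε' := by
    intro y hy
    obtain ⟨μy, hμy, hQy⟩ := hYsub hy
    obtain ⟨νs, hνV, hνWS, hνtv⟩ := hdense μy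
    have hev : ∀ᶠ n in atTop,
        (∀ ψ : ↥t, |(νs n).pair ψ.1 - y ψ| < ε') ∧ |(νs n).tv - 1| < ε' := by
      refine Filter.Eventually.and ?_ ?_
      · rw [Filter.eventually_all]
        intro ψ
        have h := Metric.tendsto_nhds.mp (hνWS ψ.1) ε' hε'0
        refine h.mono fun n hn => ?_
        rw [Real.dist_eq] at hn
        have hyψ : μy.pair ψ.1 = y ψ := congrFun hQy ψ
        rwa [hyψ] at hn
      · have h := Metric.tendsto_nhds.mp hνtv ε' hε'0
        refine h.mono fun n hn => ?_
        rw [Real.dist_eq] at hn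
        have h2 : μy.tv = 1 := hμy
        rwa [h2] at hn
    obtain ⟨m, hm⟩ := hev.exists
    exact ⟨m, νs m, hνV m, hm.1, hm.2⟩
  choose mfun νfun hνV hνpair hνtv using hnet
  refine ⟨hYfin.toFinset.attach.sup (fun y => mfun y.1 (hYfin.mem_toFinset.mp y.2)),
    fun n hn => ?_⟩
  set Sn : Set ℝ := {r : ℝ | ∃ μ : VM S N, μ.tv = 1 ∧
      r = sInf {s : ℝ | ∃ ν ∈ V n, s = max ‖A (μ - ν)‖ |μ.tv - ν.tv|}} with hSn
  have hfn_nonneg : 0 ≤ sSup Sn := by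
    refine Real.sSup_nonneg fun r hr => ?_
    obtain ⟨μ, hμ, rfl⟩ := hr
    refine Real.sInf_nonneg fun s hs => ?_
    obtain ⟨ν, _, rfl⟩ := hs
    exact le_trans (norm_nonneg _) (le_max_left _ _)
  have hfn_le : sSup Sn ≤ ε/2 := by
    refine Real.sSup_le (fun r hr => ?_) (by linarith)
    obtain ⟨μ, hμtv, rfl⟩ := hr
    have hQμ : Q μ ∈ B := ⟨μ, hμtv, rfl⟩
    obtain ⟨y, hyY, hyball⟩ := Set.mem_iUnion₂.mp (hYcov hQμ)
    set ν := νfun y hyY with hνdef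
    set m := mfun y hyY with hmdef
    have hmn : m ≤ n := by
      refine le_trans ?_ hn
      exact Finset.le_sup (f := fun y => mfun y.1 (hYfin.mem_toFinset.mp y.2))
        (Finset.mem_attach _ ⟨y, hYfin.mem_toFinset.mpr hyY⟩)
    have hνVn : ν ∈ V n := hmono hmn (hνV y hyY)
    have hcoord : ∀ ψ : ↥t, |μ.pair ψ.1 - ν.pair ψ.1| < 2*ε' := by
      intro ψ
      have h1 : |μ.pair ψ.1 - y ψ| < ε' := by
        have ha := dist_le_pi_dist (Q μ) y ψ
        have hb : dist (Q μ) y < ε' := hyball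
        have hc := lt_of_le_of_lt ha hb
        rwa [Real.dist_eq] at hc
      have h2 := hνpair y hyY ψ
      calc |μ.pair ψ.1 - ν.pair ψ.1|
          ≤ |μ.pair ψ.1 - y ψ| + |ν.pair ψ.1 - y ψ| := by
            have := abs_sub_le (μ.pair ψ.1) (y ψ) (ν.pair ψ.1)
            rw [abs_sub_comm (y ψ) (ν.pair ψ.1)] at this
            exact this
        _ < ε' + ε' := add_lt_add h1 h2
        _ = 2*ε' := by ring
    have hAb : ‖A (μ - ν)‖ ≤ ε/2 := by
      refine le_trans (claim2 (μ - ν)) ?_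
      have hgle : g (μ - ν) ≤ W * (2*ε') := by
        rw [hgdef, hWdef, Finset.sum_mul]
        refine Finset.sum_le_sum fun φ hφ => ?_
        have hps : (μ - ν).pair φ = μ.pair φ - ν.pair φ :=
          pair_sub μ ν (hφm φ) (fun x i => hφb φ x i)
        rw [hps]
        exact mul_le_mul_of_nonneg_left (hcoord ⟨φ, hφ⟩).le (inv_nonneg.mpr (hd φ).le)
      have hWε : W * (2*ε') ≤ ε/2 := by
        have h1 : ε' * (W+1) ≤ ε/4 := by
          have h2 := mul_le_mul_of_nonneg_right hε'1 (by linarith : (0:ℝ) ≤ W+1)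
          rwa [div_mul_cancel₀ _ (by linarith : (W:ℝ)+1 ≠ 0)] at h2
        nlinarith [hε'0.le, hW0]
      linarith
    have htvb : |μ.tv - ν.tv| ≤ ε/2 := by
      have h1 := hνtv y hyY
      rw [hμtv, abs_sub_comm]
      linarith [h1.le, hε'2]
    have hlb : BddBelow {s : ℝ | ∃ ν' ∈ V n, s = max ‖A (μ - ν')‖ |μ.tv - ν'.tv|} := by
      refine ⟨0, fun s hs => ?_⟩
      obtain ⟨ν', _, rfl⟩ := hs
      exact le_trans (norm_nonneg _) (le_max_left _ _)
    refine le_trans (csInf_le hlb ⟨ν, hνVn, rfl⟩) ?_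
    exact max_le hAb htvb
  rw [Real.dist_eq, sub_zero, abs_of_nonneg hfn_nonneg]
  linarith
end
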